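/- arXiv:2010.03696 — 5 statements merged into one kernel-verified Lean document; each statement's English description precedes it below -/
import Mathlib

section
/- The number of k-free integers up to X equals X/ζ(k) + O(X^{1/k}), i.e. there exists a constant C (depending on k) such that for all X ≥ 1, |∑_{n≤X} μ_k(n) − X/ζ(k)| ≤ C·X^{1/k}. -/
/-!
Möbius inversion gives `μ_k(n) = ∑_{d ^ k ∣ n} μ(d)`, so the number of `k`-free `n ≤ X` is
`∑_{d ≤ X ^ (1/k)} μ(d) ⌊X / d ^ k⌋`. Dropping the floors costs at most `X ^ (1/k) + 1`, and
completing the sum to `X ∑_d μ(d) / d ^ k = X / ζ(k)` costs `X ∑_{d > X ^ (1/k)} d ^ (-k)`,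
which is `O(X ^ (1/k))` by comparison with a telescoping series.
-/

open Classical Finset ArithmeticFunction ArithmeticFunction.Moebius

namespace Nat

noncomputable def largestPowDvdBase (k n : ℕ) : ℕ := (n.factorization ⌊/⌋ k).prod (· ^ ·)

lemma factorization_largestPowDvdBase (k n : ℕ) :
    (largestPowDvdBase k n).factorization = n.factorization ⌊/⌋ k :=
  prod_pow_factorization_eq_self fun _ hp ↦
    prime_of_mem_primeFactors (Finsupp.support_floorDiv_subset hp)

lemma largestPowDvdBase_ne_zero (k n : ℕ) : largestPowDvdBase k n ≠ 0 :=
  Finsupp.prod_ne_zero_iff.mpr fun _ hp ↦ pow_ne_zero _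
    (prime_of_mem_primeFactors (Finsupp.support_floorDiv_subset hp)).ne_zero

lemma pow_dvd_iff_dvd_largestPowDvdBase {k n : ℕ} (hk : k ≠ 0) (hn : n ≠ 0) (d : ℕ) :
    d ^ k ∣ n ↔ d ∣ largestPowDvdBase k n := by
  rcases eq_or_ne d 0 with rfl | hd
  · simp [zero_pow hk, hn, largestPowDvdBase_ne_zero]
  rw [← factorization_le_iff_dvd (pow_ne_zero k hd) hn,
    ← factorization_le_iff_dvd hd (largestPowDvdBase_ne_zero k n),
    factorization_largestPowDvdBase, factorization_pow, le_floorDiv_iff_smul_le (pos_of_ne_zero hk)]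

lemma largestPowDvdBase_eq_one_iff {k n : ℕ} (hk : k ≠ 0) (hn : n ≠ 0) :
    largestPowDvdBase k n = 1 ↔ ∀ p : ℕ, p.Prime → ¬ p ^ k ∣ n := by
  simp only [eq_one_iff_not_exists_prime_dvd, pow_dvd_iff_dvd_largestPowDvdBase hk hn]

end Nat

lemma sum_divisors_moebius (n : ℕ) :
    ∑ d ∈ n.divisors, (μ d : ℝ) = if n = 1 then 1 else 0 := by
  have h := congrArg (· n) (coe_moebius_mul_coe_zeta (R := ℝ))
  simpa only [coe_mul_zeta_apply, intCoe_apply, one_apply] using h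

lemma kFree_indicator_eq_sum_moebius {k n : ℕ} (hk : k ≠ 0) (hn : n ≠ 0) :
    (if ∀ p : ℕ, p.Prime → ¬ p ^ k ∣ n then (1 : ℝ) else 0) =
      ∑ d ∈ (Nat.largestPowDvdBase k n).divisors, (μ d : ℝ) := by
  simp only [sum_divisors_moebius, Nat.largestPowDvdBase_eq_one_iff hk hn]

lemma sum_kFree_indicator_eq {k N D : ℕ} (hk : k ≠ 0) (hND : N < (D + 1) ^ k) :
    ∑ n ∈ Icc 1 N, (if ∀ p : ℕ, p.Prime → ¬ p ^ k ∣ n then (1 : ℝ) else 0) =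
      ∑ d ∈ range (D + 1), (μ d : ℝ) * (N / d ^ k : ℕ) := by
  have h_indicator : ∀ n ∈ Icc 1 N,
      (if ∀ p : ℕ, p.Prime → ¬ p ^ k ∣ n then (1 : ℝ) else 0) =
        ∑ d ∈ range (D + 1), if d ^ k ∣ n then (μ d : ℝ) else 0 := by
    intro n hn
    obtain ⟨hn1, hnN⟩ := mem_Icc.mp hn
    have hn0 : n ≠ 0 := by omega
    rw [kFree_indicator_eq_sum_moebius hk hn0, ← sum_filter]
    congr 1
    ext d
    simp only [mem_filter, mem_range, Nat.mem_divisors,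
      ← Nat.pow_dvd_iff_dvd_largestPowDvdBase hk hn0, Nat.largestPowDvdBase_ne_zero,
      ne_eq, not_false_eq_true, and_true, iff_and_self]
    intro hd
    have : d ^ k < (D + 1) ^ k := (Nat.le_of_dvd (by omega) hd).trans_lt (by omega)
    exact (Nat.pow_lt_pow_iff_left hk).mp this
  rw [sum_congr rfl h_indicator, sum_comm]
  refine sum_congr rfl fun d _ ↦ ?_
  rw [← sum_filter, sum_const, nsmul_eq_mul, mul_comm, ← Nat.Ioc_filter_dvd_card_eq_div,
    ← Icc_add_one_left_eq_Ioc, zero_add]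

lemma summable_moebius_div_pow {k : ℕ} (hk : 1 < k) :
    Summable fun d : ℕ ↦ (μ d : ℝ) / (d : ℝ) ^ k :=
  (Real.summable_one_div_nat_pow.mpr hk).of_norm_bounded fun d ↦ by
    rw [norm_div, norm_pow, Real.norm_natCast, Real.norm_eq_abs]
    exact div_le_div_of_nonneg_right (by exact_mod_cast abs_moebius_le_one) (by positivity)

lemma LSeries_ofReal_eq_tsum (f : ℕ → ℝ) {k : ℕ} (hk : k ≠ 0) :
    LSeries (fun n ↦ (f n : ℂ)) k = ↑(∑' n : ℕ, f n / (n : ℝ) ^ k) := by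
  rw [Complex.ofReal_tsum]
  refine tsum_congr fun n ↦ ?_
  rcases eq_or_ne n 0 with rfl | hn
  · simp [LSeries.term_zero, hk]
  · rw [LSeries.term_of_ne_zero hn, Complex.cpow_natCast]
    push_cast
    rfl

lemma tsum_moebius_div_pow_eq_inv {k : ℕ} (hk : 1 < k) :
    ∑' d : ℕ, (μ d : ℝ) / (d : ℝ) ^ k = (∑' n : ℕ, 1 / ((n : ℝ) + 1) ^ k)⁻¹ := by
  have hk0 : k ≠ 0 := by omega
  have h := LSeries_one_mul_Lseries_moebius (s := k) (by simpa using hk)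
  have h_one : (1 : ℕ → ℂ) = fun _ ↦ ((1 : ℝ) : ℂ) := by ext; simp
  have h_moebius : (fun n ↦ ((μ n : ℤ) : ℂ)) = fun n ↦ ((μ n : ℝ) : ℂ) := by ext; simp
  rw [h_one, h_moebius, LSeries_ofReal_eq_tsum _ hk0, LSeries_ofReal_eq_tsum _ hk0,
    ← Complex.ofReal_mul, Complex.ofReal_eq_one] at h
  rw [eq_inv_of_mul_eq_one_right h, (Real.summable_one_div_nat_pow.mpr hk).tsum_eq_zero_add]
  simp [hk0]

lemma sum_range_inv_pow_add_le {k : ℕ} (hk : 2 ≤ k) {D : ℝ} (hD : 0 < D) (n : ℕ) :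
    ∑ i ∈ range n, 1 / (D + 1 + i) ^ k ≤ 1 / D ^ (k - 1) := by
  obtain ⟨j, rfl⟩ : ∃ j, k = j + 2 := ⟨k - 2, by omega⟩
  have h_term : ∀ i : ℕ, 1 / (D + 1 + i) ^ (j + 2) ≤
      (1 / (D + i) - 1 / (D + (i + 1 : ℕ))) / D ^ j := by
    intro i
    have hi : (0 : ℝ) ≤ i := i.cast_nonneg
    have h_telescope : (1 / (D + i) - 1 / (D + (i + 1 : ℕ))) / D ^ j =
        1 / (D ^ j * ((D + i) * (D + 1 + i))) := by
      push_cast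
      field_simp
      ring
    rw [h_telescope, pow_add]
    refine one_div_le_one_div_of_le (by positivity) (mul_le_mul ?_ ?_ (by positivity) (by positivity))
    · gcongr
      linarith
    · nlinarith
  calc ∑ i ∈ range n, 1 / (D + 1 + i) ^ (j + 2)
      ≤ ∑ i ∈ range n, (1 / (D + i) - 1 / (D + (i + 1 : ℕ))) / D ^ j := sum_le_sum fun i _ ↦ h_term i
    _ = (1 / D - 1 / (D + n)) / D ^ j := by
      rw [← sum_div, sum_range_sub' (fun i : ℕ ↦ 1 / (D + i))]
      simp
    _ ≤ 1 / D / D ^ j := by gcongr; exact sub_le_self _ (by positivity)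
    _ = 1 / D ^ (j + 2 - 1) := by rw [div_div, ← pow_succ']; rfl

lemma abs_tsum_moebius_div_pow_nat_add_le {k : ℕ} (hk : 2 ≤ k) {D : ℕ} (hD : 0 < D) :
    |∑' i : ℕ, (μ (i + (D + 1)) : ℝ) / ((i + (D + 1) : ℕ) : ℝ) ^ k| ≤ 1 / (D : ℝ) ^ (k - 1) := by
  have h_summable :=
    ((summable_nat_add_iff (D + 1)).mpr (summable_moebius_div_pow (by omega : 1 < k))).norm
  rw [← Real.norm_eq_abs]
  refine (norm_tsum_le_tsum_norm h_summable).trans <|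
    Real.tsum_le_of_sum_range_le (fun _ ↦ norm_nonneg _) fun n ↦ ?_
  refine le_trans (sum_le_sum fun i _ ↦ ?_) (sum_range_inv_pow_add_le hk (Nat.cast_pos.mpr hD) n)
  rw [norm_div, norm_pow, Real.norm_natCast, Real.norm_eq_abs, Nat.cast_add, Nat.cast_add,
    Nat.cast_one, add_comm (i : ℝ)]
  exact div_le_div_of_nonneg_right (by exact_mod_cast abs_moebius_le_one) (by positivity)

lemma abs_sum_moebius_mul_floor_sub_le (s : Finset ℕ) (y : ℕ → ℝ) (hy : ∀ d ∈ s, 0 ≤ y d) :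
    |∑ d ∈ s, (μ d : ℝ) * (⌊y d⌋₊ - y d)| ≤ #s := by
  refine (abs_sum_le_sum_abs _ _).trans ?_
  rw [card_eq_sum_ones, Nat.cast_sum]
  refine sum_le_sum fun d hd ↦ ?_
  rw [abs_mul, Nat.cast_one, ← one_mul (1 : ℝ)]
  refine mul_le_mul (by exact_mod_cast abs_moebius_le_one) ?_ (abs_nonneg _) zero_le_one
  rw [abs_sub_comm, abs_le]
  constructor <;> linarith [Nat.floor_le (hy d hd), Nat.lt_floor_add_one (y d)]

lemma pow_succ_div_floor_pow_le {x : ℝ} (hx : 1 ≤ x) (j : ℕ) :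
    x ^ (j + 1) / (⌊x⌋₊ : ℝ) ^ j ≤ 2 ^ j * x := by
  have hD : (1 : ℝ) ≤ ⌊x⌋₊ := by exact_mod_cast Nat.one_le_floor_iff x |>.mpr hx
  have h_ratio : x / ⌊x⌋₊ ≤ 2 := by
    rw [div_le_iff₀ (by positivity)]
    linarith [Nat.lt_floor_add_one x]
  calc x ^ (j + 1) / (⌊x⌋₊ : ℝ) ^ j = (x / ⌊x⌋₊) ^ j * x := by rw [div_pow, pow_succ]; ring
    _ ≤ 2 ^ j * x := by gcongr

lemma abs_sum_kFree_indicator_sub_le {k D : ℕ} (hk : 2 ≤ k) (hD : 0 < D) {X : ℝ} (hX : 0 ≤ X)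
    (hXD : ⌊X⌋₊ < (D + 1) ^ k) :
    |(∑ n ∈ Icc 1 ⌊X⌋₊, if ∀ p : ℕ, p.Prime → ¬ p ^ k ∣ n then (1 : ℝ) else 0) -
        X / (∑' n : ℕ, (1 : ℝ) / ((n : ℝ) + 1) ^ k)| ≤ D + 1 + X / (D : ℝ) ^ (k - 1) := by
  have h_floor (d : ℕ) : ((⌊X⌋₊ / d ^ k : ℕ) : ℝ) = ⌊X / (d : ℝ) ^ k⌋₊ := by
    rw [← Nat.floor_div_natCast, Nat.cast_pow]
  set tail := ∑' i : ℕ, (μ (i + (D + 1)) : ℝ) / ((i + (D + 1) : ℕ) : ℝ) ^ k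
  set error := ∑ d ∈ range (D + 1), (μ d : ℝ) * (⌊X / (d : ℝ) ^ k⌋₊ - X / (d : ℝ) ^ k)
  have h_split :
      (∑ n ∈ Icc 1 ⌊X⌋₊, if ∀ p : ℕ, p.Prime → ¬ p ^ k ∣ n then (1 : ℝ) else 0) -
        X / (∑' n : ℕ, (1 : ℝ) / ((n : ℝ) + 1) ^ k) = error - X * tail := by
    rw [sum_kFree_indicator_eq (by omega) hXD, div_eq_mul_inv,
      ← tsum_moebius_div_pow_eq_inv (by omega),
      ← (summable_moebius_div_pow (by omega)).sum_add_tsum_nat_add (D + 1)]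
    simp only [tail, error, h_floor, mul_sub, sum_sub_distrib, mul_add, mul_sum]
    ring_nf
  have h_error : |error| ≤ D + 1 := by
    simpa using abs_sum_moebius_mul_floor_sub_le (range (D + 1)) (fun d ↦ X / (d : ℝ) ^ k)
      fun d _ ↦ by positivity
  rw [h_split]
  calc |error - X * tail| ≤ |error| + X * |tail| :=
        (abs_sub _ _).trans_eq (by rw [abs_mul, abs_of_nonneg hX])
    _ ≤ D + 1 + X * (1 / (D : ℝ) ^ (k - 1)) := by
        gcongr
        exact abs_tsum_moebius_div_pow_nat_add_le hk hD
    _ = D + 1 + X / (D : ℝ) ^ (k - 1) := by rw [mul_one_div]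

/-- The number of k-free integers up to X equals X/ζ(k) + O(X^{1/k}). -/
theorem stmt_0 (k : ℕ) (hk : 2 ≤ k) :
    ∃ C : ℝ, 0 < C ∧ ∀ X : ℝ, 1 ≤ X →
      |(∑ n ∈ Finset.Icc 1 ⌊X⌋₊,
          if ∀ p : ℕ, p.Prime → ¬ p ^ k ∣ n then (1 : ℝ) else 0) -
        X / (∑' n : ℕ, (1 : ℝ) / ((n : ℝ) + 1) ^ k)| ≤ C * X ^ ((1 : ℝ) / k) := by
  refine ⟨2 + 2 ^ (k - 1), by positivity, fun X hX ↦ ?_⟩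
  set x := X ^ ((1 : ℝ) / k)
  have hx : 1 ≤ x := Real.one_le_rpow hX (by positivity)
  have hxX : x ^ k = X := by
    rw [← Real.rpow_natCast, ← Real.rpow_mul (by linarith), one_div_mul_cancel (by positivity),
      Real.rpow_one]
  have hXD : ⌊X⌋₊ < (⌊x⌋₊ + 1) ^ k := by
    rw [Nat.floor_lt (by linarith), ← hxX]
    push_cast
    exact pow_lt_pow_left₀ (Nat.lt_floor_add_one x) (by linarith) (by omega)
  refine (abs_sum_kFree_indicator_sub_le hk (Nat.floor_pos.mpr hx) (by linarith) hXD).trans ?_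
  have h_tail : X / (⌊x⌋₊ : ℝ) ^ (k - 1) ≤ 2 ^ (k - 1) * x := by
    rw [← hxX, ← Nat.sub_add_cancel (by omega : 1 ≤ k), Nat.add_sub_cancel]
    exact pow_succ_div_floor_pow_le hx _
  linarith [Nat.floor_le (by linarith : 0 ≤ x)]
end

section
/- For a squarefree integer d coprime to q, with h = (h_1,...,h_j) a tuple of integers, the number of residues n modulo d^k such that d divides ξ(n) := ∏_i σ(n + h_i q) equals U_d := ∏_{p | d} u_p(h), where σ(n) = ∏_{p^k | n} p. -/
/-!
For a prime `p` and `k ≥ 1`, `p ∣ σ(m)` exactly when `p ^ k ∣ m`. As `d` is squarefree, `d ∣ ξ(n)`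
thus says that for every `p ∣ d` the residue of `n` modulo `p ^ k` lies in `{-h_i q}`, a set of
`u_p(h)` elements because `q` is a unit modulo `p ^ k`. By the Chinese remainder theorem the
residues modulo `d ^ k = ∏_{p ∣ d} p ^ k` satisfying these independent conditions number
`∏_{p ∣ d} u_p(h)`.
-/

/-- σ(m) = ∏_{p prime, p^k ∣ m} p, with the convention σ(0) = 0. -/
def sig (k : ℕ) (m : ℤ) : ℤ :=
  if m = 0 then 0
  else ∏ p ∈ m.natAbs.primeFactors.filter (fun p : ℕ => ((p : ℕ) : ℤ) ^ k ∣ m), (p : ℤ)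

open Finset

lemma prime_dvd_sig_iff {k p : ℕ} (hk : k ≠ 0) (hp : p.Prime) (m : ℤ) :
    (p : ℤ) ∣ sig k m ↔ (p : ℤ) ^ k ∣ m := by
  unfold sig
  split_ifs with hm
  · simp [hm]
  constructor
  · intro hdvd
    obtain ⟨l, hl, hpl⟩ := (Prime.dvd_finsetProd_iff (Nat.prime_iff_prime_int.mp hp) _).mp hdvd
    rw [mem_filter, Nat.mem_primeFactors] at hl
    obtain rfl : p = l := (Nat.prime_dvd_prime_iff_eq hp hl.1.1).mp (Int.natCast_dvd_natCast.mp hpl)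
    exact hl.2
  · intro hdvd
    have hpm : (p : ℤ) ∣ m := (dvd_pow_self _ hk).trans hdvd
    refine dvd_prod_of_mem _ (mem_filter.mpr ⟨?_, hdvd⟩)
    exact Nat.mem_primeFactors.mpr ⟨hp, Int.natCast_dvd.mp hpm, Int.natAbs_ne_zero.mpr hm⟩

lemma prime_dvd_prod_sig_iff {ι : Type*} {k p : ℕ} (hk : k ≠ 0) (hp : p.Prime) (s : Finset ι)
    (f : ι → ℤ) : (p : ℤ) ∣ ∏ i ∈ s, sig k (f i) ↔ ∃ i ∈ s, (p : ℤ) ^ k ∣ f i := by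
  simp only [Prime.dvd_finsetProd_iff (Nat.prime_iff_prime_int.mp hp), prime_dvd_sig_iff hk hp]

lemma Squarefree.natCast_dvd_iff_forall_primeFactors {d : ℕ} (hd : Squarefree d) (x : ℤ) :
    (d : ℤ) ∣ x ↔ ∀ p ∈ d.primeFactors, (p : ℤ) ∣ x := by
  refine ⟨fun hdx p hp => (Int.natCast_dvd_natCast.mpr (Nat.dvd_of_mem_primeFactors hp)).trans hdx,
    fun H => ?_⟩
  rw [Int.natCast_dvd, ← Nat.prod_primeFactors_of_squarefree hd]
  exact Finset.prod_primes_dvd _ (fun p hp => (Nat.prime_of_mem_primeFactors hp).prime)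
    (fun p hp => Int.natCast_dvd.mp (H p hp))

lemma ZMod.neg_intCast_eq_natCast_iff_dvd_add (m n : ℕ) (a : ℤ) :
    -(a : ZMod m) = n ↔ (m : ℤ) ∣ n + a := by
  rw [← ZMod.intCast_zmod_eq_zero_iff_dvd, neg_eq_iff_add_eq_zero, add_comm]
  push_cast
  rfl

lemma card_filter_range_natCast_eq_card_filter_zmod {N : ℕ} [NeZero N] (P : ZMod N → Prop)
    [DecidablePred P] :
    #{n ∈ range N | P ((n : ℕ) : ZMod N)} = #{x : ZMod N | P x} := by
  refine card_bij' (fun n _ => (n : ZMod N)) (fun x _ => x.val) ?_ ?_ ?_ ?_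
  · intro n hn
    simpa using (mem_filter.mp hn).2
  · intro x hx
    simpa [ZMod.val_lt x] using hx
  · intro n hn
    exact ZMod.val_cast_of_lt (mem_range.mp (mem_filter.mp hn).1)
  · intro x _
    exact ZMod.natCast_zmod_val x

lemma card_filter_range_prod_forall_natCast_mem {ι : Type*} [Fintype ι] [DecidableEq ι]
    (m : ι → ℕ) (hm : Pairwise (Function.onFun Nat.Coprime m)) (hm0 : ∀ i, m i ≠ 0)
    (S : ∀ i, Finset (ZMod (m i))) :
    #{n ∈ range (∏ i, m i) | ∀ i, (n : ZMod (m i)) ∈ S i} = ∏ i, #(S i) := by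
  have : NeZero (∏ i, m i) := ⟨prod_ne_zero_iff.mpr fun i _ => hm0 i⟩
  let E := ZMod.prodEquivPi m hm
  have hE (n : ℕ) (i : ι) : E n i = n := by
    rw [map_natCast]
    rfl
  calc _ = #{x : ZMod (∏ i, m i) | ∀ i, E x i ∈ S i} := by
        simp only [← hE]
        exact card_filter_range_natCast_eq_card_filter_zmod fun x => ∀ i, E x i ∈ S i
    _ = #(Fintype.piFinset S) := card_equiv E.toEquiv fun x => by simp
    _ = ∏ i, #(S i) := Fintype.card_piFinset S

lemma card_image_neg_mul_of_isUnit {R : Type*} [Ring R] [DecidableEq R] {u : R} (hu : IsUnit u)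
    (s : Finset R) : #(s.image fun x => -(x * u)) = #s :=
  card_image_of_injective s (neg_injective.comp hu.mul_left_injective)

theorem stmt_2_general (k j q : ℕ) (hk : 2 ≤ k)
    (h : Fin j → ℤ) (d : ℕ) (hd : Squarefree d) (hdq : Nat.Coprime d q) :
    ((Finset.range (d ^ k)).filter
        (fun n : ℕ => (d : ℤ) ∣ ∏ i, sig k ((n : ℤ) + h i * q))).card
      = ∏ p ∈ d.primeFactors,
          (Finset.univ.image fun i => ((h i : ZMod (p ^ k)))).card := by
  have hk0 : k ≠ 0 := by omega
  let H (p : d.primeFactors) : Finset (ZMod ((p : ℕ) ^ k)) := univ.image fun i => (h i : ZMod _)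
  have hmem (n : ℕ) : (d : ℤ) ∣ ∏ i, sig k (n + h i * q) ↔
      ∀ p : d.primeFactors, (n : ZMod ((p : ℕ) ^ k)) ∈ (H p).image fun x => -(x * (q : ZMod _)) := by
    rw [hd.natCast_dvd_iff_forall_primeFactors, Finset.forall_coe]
    refine forall₂_congr fun p hp => ?_
    simp only [prime_dvd_prod_sig_iff hk0 (Nat.prime_of_mem_primeFactors hp), H, image_image,
      mem_image, mem_univ, true_and, Function.comp_apply]
    refine exists_congr fun i => ?_
    rw [← Nat.cast_pow, ← ZMod.neg_intCast_eq_natCast_iff_dvd_add]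
    push_cast
    rfl
  have hunit (p : d.primeFactors) : IsUnit (q : ZMod ((p : ℕ) ^ k)) :=
    (ZMod.isUnit_iff_coprime _ _).mpr
      ((hdq.coprime_dvd_left (Nat.dvd_of_mem_primeFactors p.2)).symm.pow_right k)
  have hprod : ∏ p : d.primeFactors, (p : ℕ) ^ k = d ^ k := by
    rw [prod_coe_sort d.primeFactors (· ^ k), prod_pow, Nat.prod_primeFactors_of_squarefree hd]
  calc _ = #{n ∈ range (∏ p : d.primeFactors, (p : ℕ) ^ k) |
          ∀ p, (n : ZMod ((p : ℕ) ^ k)) ∈ (H p).image fun x => -(x * (q : ZMod _))} := by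
        rw [hprod, filter_congr fun n _ => hmem n]
    _ = ∏ p : d.primeFactors, #(H p) := by
        rw [card_filter_range_prod_forall_natCast_mem]
        · exact prod_congr rfl fun p _ => card_image_neg_mul_of_isUnit (hunit p) _
        · exact fun p p' hpp' => Nat.Coprime.pow k k ((Nat.coprime_primes
            (Nat.prime_of_mem_primeFactors p.2) (Nat.prime_of_mem_primeFactors p'.2)).mpr
            (Subtype.ext_iff.not.mp hpp'))
        · exact fun p => pow_ne_zero k (Nat.prime_of_mem_primeFactors p.2).ne_zero
    _ = _ := prod_coe_sort d.primeFactors fun p => #(univ.image fun i => (h i : ZMod (p ^ k)))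

/-- For squarefree d coprime to q, the number of residues n mod d^k with
d ∣ ξ(n) = ∏_i σ(n + h_i q) equals U_d = ∏_{p ∣ d} u_p(h). -/
theorem stmt_2 (k j q : ℕ) (hk : 2 ≤ k) (hj : 1 ≤ j) (hq : 0 < q)
    (h : Fin j → ℤ) (d : ℕ) (hd : Squarefree d) (hdq : Nat.Coprime d q) :
    ((Finset.range (d ^ k)).filter
        (fun n : ℕ => (d : ℤ) ∣ ∏ i, sig k ((n : ℤ) + h i * q))).card
      = ∏ p ∈ d.primeFactors,
          (Finset.univ.image fun i => ((h i : ZMod (p ^ k)))).card :=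
  stmt_2_general k j q hk h d hd hdq
end

section
/- For every ε > 0, integers k ≥ 2 and j ≥ 1, and any j-tuple h = (h_1,...,h_j) of distinct integers, the number of tuples (n, d_1,...,d_j) with n ≤ x, d_i^k | n + h_i, the d_i pairwise coprime, and d_1·d_2···d_j > y, is O_{ε,j}(x^ε (X y^{−k+1} + X^{2/(k+1)})), where X = max_i (x + h_i). -/
/-!
Put `T = X^{1/(k+1)}`. Every counted tuple `(n, d)` has a componentwise divisor `e ∣ d` with
pairwise coprime entries such that either `y < ∏ eᵢ` and `(∏ eᵢ)^k ≤ X` (take `e = d`), or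
`T < ∏ eᵢ ≤ T²` (if `(∏ dᵢ)^k > X`, then every `dᵢ ≤ T²` while `∏ dᵢ > T`, so some sub-product
of the `dᵢ` lands in `(T, T²]`). Given `e`, the Chinese remainder theorem confines `n` to one
residue class modulo `∏ eᵢ^k`, leaving at most `X / ∏ eᵢ^k + 1 ≤ 2 (X y^{1-k} + T²) / ∏ eᵢ`
values, and given `n` each `dᵢ` is a divisor of `n + hᵢ ≤ X`. Summing `1 / ∏ eᵢ` over `e` gives
the `j`-th power of a harmonic sum, and with the divisor bound `τ(m) ≪_δ m^δ` all losses are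
`X^{O(jδ)}`, which is at most `x^ε` when `X ≤ x^{k+1}`. When `X > x^{k+1}`, the trivial bound
`x · (max τ)^j ≤ X^{1/(k+1) + o(1)}` suffices.
-/

open Finset

theorem add_one_le_pow_of_two_le {b : ℝ} (hb : 2 ≤ b) (a : ℕ) : (a + 1 : ℝ) ≤ b ^ a := by
  calc (a + 1 : ℝ) ≤ 2 ^ a := by exact_mod_cast Nat.lt_two_pow_self
    _ ≤ b ^ a := pow_le_pow_left₀ (by norm_num) hb a

theorem add_one_le_div_sub_one_mul_pow {b c : ℝ} (hc : 1 < c) (hcb : c ≤ b) (a : ℕ) :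
    (a + 1 : ℝ) ≤ c / (c - 1) * b ^ a := by
  have hc1 : 0 < c - 1 := sub_pos.mpr hc
  have hBernoulli : 1 + a * (c - 1) ≤ b ^ a :=
    (one_add_mul_le_pow (by linarith) a).trans (pow_le_pow_left₀ (by linarith) (by linarith) a)
  have hexpand : c / (c - 1) * (1 + a * (c - 1)) = c / (c - 1) + a * c := by
    field_simp
  have hfactor : 1 ≤ c / (c - 1) := (one_le_div hc1).mpr (by linarith)
  calc (a + 1 : ℝ) ≤ c / (c - 1) * (1 + a * (c - 1)) := by
        rw [hexpand]; nlinarith [(a.cast_nonneg : (0:ℝ) ≤ a)]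
    _ ≤ c / (c - 1) * b ^ a := by gcongr

theorem Nat.card_divisors_le_mul_rpow {δ : ℝ} (hδ : 0 < δ) :
    ∃ C : ℝ, 1 ≤ C ∧ ∀ m : ℕ, m ≠ 0 → (#m.divisors : ℝ) ≤ C * (m : ℝ) ^ δ := by
  obtain ⟨N, hN⟩ := Filter.eventually_atTop.mp <|
    ((tendsto_rpow_atTop hδ).comp tendsto_natCast_atTop_atTop).eventually_ge_atTop 2
  set c : ℝ := 2 ^ δ
  have hc : 1 < c := Real.one_lt_rpow (by norm_num) hδ
  have hC : 1 ≤ c / (c - 1) := (one_le_div (sub_pos.mpr hc)).mpr (by linarith)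
  refine ⟨(c / (c - 1)) ^ N, one_le_pow₀ hC, fun m hm => ?_⟩
  -- A prime with `p ^ δ ≥ 2` costs nothing; each prime below `N` costs at most `c / (c - 1)`.
  have hprime : ∀ p ∈ m.primeFactors, ((m.factorization p + 1 : ℕ) : ℝ) ≤
      (if p < N then c / (c - 1) else 1) * ((p : ℝ) ^ δ) ^ m.factorization p := by
    intro p hp
    push_cast
    split_ifs with hpN
    · have h2p : (2 : ℝ) ≤ p := by exact_mod_cast (Nat.prime_of_mem_primeFactors hp).two_le
      exact add_one_le_div_sub_one_mul_pow hc (Real.rpow_le_rpow (by norm_num) h2p hδ.le) _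
    · rw [one_mul]
      exact add_one_le_pow_of_two_le (hN p (not_lt.mp hpN)) _
  have hsmall : ∏ p ∈ m.primeFactors, (if p < N then c / (c - 1) else 1) ≤ (c / (c - 1)) ^ N := by
    rw [prod_ite, prod_const, prod_const_one, mul_one]
    refine pow_le_pow_right₀ hC ((card_le_card fun p hp => ?_).trans (card_range N).le)
    exact mem_range.mpr (mem_filter.mp hp).2
  have hm_rpow : ∏ p ∈ m.primeFactors, ((p : ℝ) ^ δ) ^ m.factorization p = (m : ℝ) ^ δ := by
    conv_rhs => rw [Nat.prod_primeFactors_pow_factorization hm]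
    push_cast
    rw [← Real.finsetProd_rpow _ _ (fun p _ => by positivity)]
    exact prod_congr rfl fun p _ => Real.rpow_pow_comm (by positivity) _ _
  calc (#m.divisors : ℝ) = ∏ p ∈ m.primeFactors, ((m.factorization p + 1 : ℕ) : ℝ) := by
        rw [Nat.card_divisors hm]; push_cast; rfl
    _ ≤ ∏ p ∈ m.primeFactors,
          (if p < N then c / (c - 1) else 1) * ((p : ℝ) ^ δ) ^ m.factorization p :=
        prod_le_prod (fun _ _ => by positivity) hprime
    _ ≤ (c / (c - 1)) ^ N * (m : ℝ) ^ δ := by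
        rw [prod_mul_distrib, hm_rpow]
        gcongr

theorem sum_Icc_inv_le_mul_rpow {δ : ℝ} (hδ : 0 < δ) (M : ℕ) :
    ∑ d ∈ Icc 1 M, (d : ℝ)⁻¹ ≤ (1 + 1 / δ) * (M : ℝ) ^ δ := by
  rcases M.eq_zero_or_pos with rfl | hM
  · simp [Real.zero_rpow hδ.ne']
  have hM1 : (1 : ℝ) ≤ M := by exact_mod_cast hM
  have hharmonic : ∑ d ∈ Icc 1 M, (d : ℝ)⁻¹ ≤ 1 + Real.log M := by
    simpa [harmonic_eq_sum_Icc] using harmonic_le_one_add_log M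
  have hlog := Real.log_le_rpow_div (M.cast_nonneg : (0 : ℝ) ≤ M) hδ
  have hMδ : 1 ≤ (M : ℝ) ^ δ := Real.one_le_rpow hM1 hδ.le
  calc ∑ d ∈ Icc 1 M, (d : ℝ)⁻¹ ≤ 1 + (M : ℝ) ^ δ / δ := by linarith
    _ ≤ (1 + 1 / δ) * (M : ℝ) ^ δ := by rw [add_mul, one_mul, one_div_mul_eq_div]; linarith

section

variable {R ι : Type*} [CommSemiring R] [LinearOrder R] [IsStrictOrderedRing R]

theorem Finset.exists_subset_prod_mem_Ioc_of_le {s : Finset ι} {v : ι → R} {T : R} (hT : 1 ≤ T)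
    (hv0 : ∀ i ∈ s, 0 ≤ v i) (hvT : ∀ i ∈ s, v i ≤ T) (hs : T < ∏ i ∈ s, v i) :
    ∃ t ⊆ s, ∏ i ∈ t, v i ∈ Set.Ioc T (T ^ 2) := by
  classical
  induction s using Finset.induction_on with
  | empty => exact absurd hs (by simpa using hT)
  | insert a s ha ih =>
    rw [prod_insert ha] at hs
    by_cases hsT : T < ∏ i ∈ s, v i
    · obtain ⟨t, hts, ht⟩ := ih (fun i hi => hv0 i (mem_insert_of_mem hi))
        (fun i hi => hvT i (mem_insert_of_mem hi)) hsT
      exact ⟨t, hts.trans (subset_insert a s), ht⟩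
    · refine ⟨insert a s, Subset.rfl, ?_⟩
      rw [prod_insert ha, sq]
      exact ⟨hs, mul_le_mul (hvT a (mem_insert_self a s)) (not_lt.mp hsT)
        (prod_nonneg fun i hi => hv0 i (mem_insert_of_mem hi)) (zero_le_one.trans hT)⟩

theorem Finset.exists_subset_prod_mem_Ioc {s : Finset ι} {v : ι → R} {T : R} (hT : 1 ≤ T)
    (hv0 : ∀ i ∈ s, 0 ≤ v i) (hvT : ∀ i ∈ s, v i ≤ T ^ 2) (hs : T < ∏ i ∈ s, v i) :
    ∃ t ⊆ s, ∏ i ∈ t, v i ∈ Set.Ioc T (T ^ 2) := by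
  classical
  by_cases hlarge : ∃ i ∈ s, T < v i
  · obtain ⟨i, hi, hTi⟩ := hlarge
    exact ⟨{i}, singleton_subset_iff.mpr hi, by simpa using ⟨hTi, hvT i hi⟩⟩
  · simp only [not_exists, not_and, not_lt] at hlarge
    exact exists_subset_prod_mem_Ioc_of_le hT hv0 hlarge hs

end

theorem Int.card_le_div_add_one_of_modEq {s : Finset ℤ} {a b r : ℤ} (hab : a ≤ b) (hr : 0 < r)
    (hs : ∀ z ∈ s, z ∈ Ioc a b) (hmod : ∀ z ∈ s, ∀ z' ∈ s, z ≡ z' [ZMOD r]) :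
    (#s : ℝ) ≤ (b - a) / r + 1 := by
  rcases s.eq_empty_or_nonempty with rfl | ⟨v, hv⟩
  · have : (0 : ℝ) ≤ b - a := by exact_mod_cast sub_nonneg.mpr hab
    simp only [card_empty, CharP.cast_eq_zero]
    positivity
  have hsub : s ⊆ {z ∈ Ioc a b | z ≡ v [ZMOD r]} := fun z hz =>
    mem_filter.mpr ⟨hs z hz, hmod z hz v hv⟩
  have hcard : (((#{z ∈ Ioc a b | z ≡ v [ZMOD r]} : ℕ) : ℤ) : ℚ) ≤ (b - a) / r + 1 := by
    have hfloor := Int.sub_one_lt_floor (((a : ℚ) - v) / r)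
    have hfloor' := Int.floor_le (((b : ℚ) - v) / r)
    have hdiv : ((b : ℚ) - v) / r - (a - v) / r = (b - a) / r := by ring
    have hnonneg : (0 : ℚ) ≤ (b - a) / r := by
      have : (0 : ℚ) ≤ b - a := by exact_mod_cast sub_nonneg.mpr hab
      positivity
    rw [Int.Ioc_filter_modEq_card a b hr v, Int.cast_max]
    exact max_le (by push_cast; linarith) (by push_cast; linarith)
  calc (#s : ℝ) ≤ (#{z ∈ Ioc a b | z ≡ v [ZMOD r]} : ℝ) := by exact_mod_cast card_le_card hsub
    _ ≤ (b - a) / r + 1 := by exact_mod_cast hcard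

theorem Finset.card_le_card_mul_of_card_fiber_le {α β R : Type*} [DecidableEq β] [Semiring R]
    [PartialOrder R] [IsOrderedRing R] {s : Finset α} {t : Finset β} {f : α → β}
    (hf : ∀ a ∈ s, f a ∈ t) {K : R} (hK : ∀ b ∈ t, (#{a ∈ s | f a = b} : R) ≤ K) :
    (#s : R) ≤ #t * K := by
  rw [card_eq_sum_card_fiberwise hf, Nat.cast_sum, ← nsmul_eq_mul]
  exact sum_le_card_nsmul _ _ _ hK

namespace Mirsky

variable {j : ℕ}

noncomputable def tuples (k : ℕ) (x y X : ℝ) (h : Fin j → ℤ) : Finset (ℕ × (Fin j → ℕ)) :=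
  (Finset.Icc 1 ⌊x⌋₊ ×ˢ Fintype.piFinset fun _ : Fin j => Finset.Icc 1 ⌊X⌋₊).filter
    fun nd => (∀ i, 0 < (nd.1 : ℤ) + h i ∧ ((nd.2 i : ℤ)) ^ k ∣ (nd.1 : ℤ) + h i) ∧
      (∀ i i', i ≠ i' → Nat.Coprime (nd.2 i) (nd.2 i')) ∧ y < ∏ i, (nd.2 i : ℝ)

variable {k : ℕ} {x y X : ℝ} {h : Fin j → ℤ}

theorem mem_tuples {p : ℕ × (Fin j → ℕ)} : p ∈ tuples k x y X h ↔
    (p.1 ∈ Icc 1 ⌊x⌋₊ ∧ ∀ i, p.2 i ∈ Icc 1 ⌊X⌋₊) ∧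
      (∀ i, 0 < (p.1 : ℤ) + h i ∧ ((p.2 i : ℤ)) ^ k ∣ (p.1 : ℤ) + h i) ∧
      (∀ i i', i ≠ i' → Nat.Coprime (p.2 i) (p.2 i')) ∧ y < ∏ i, (p.2 i : ℝ) := by
  rw [tuples, mem_filter, mem_product, Fintype.mem_piFinset]

theorem cast_add_le_of_mem_Icc (hx : 0 ≤ x) (hXmax : ∀ i, x + h i ≤ X) {n : ℕ} (hn : n ∈ Icc 1 ⌊x⌋₊)
    (i : Fin j) : (((n : ℤ) + h i : ℤ) : ℝ) ≤ X := by
  have : (n : ℝ) ≤ x := (Nat.cast_le.mpr (mem_Icc.mp hn).2).trans (Nat.floor_le hx)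
  push_cast
  linarith [hXmax i]

theorem pow_le_of_mem_tuples (hx : 0 ≤ x) (hXmax : ∀ i, x + h i ≤ X)
    {p : ℕ × (Fin j → ℕ)} (hp : p ∈ tuples k x y X h) (i : Fin j) : (p.2 i : ℝ) ^ k ≤ X := by
  obtain ⟨⟨hn, -⟩, hdvd, -⟩ := mem_tuples.mp hp
  have hle : ((p.2 i : ℤ) : ℝ) ^ k ≤ (((p.1 : ℤ) + h i : ℤ) : ℝ) := by
    exact_mod_cast Int.le_of_dvd (hdvd i).1 (hdvd i).2
  exact_mod_cast hle.trans (cast_add_le_of_mem_Icc hx hXmax hn i)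

theorem one_le_of_mem_tuples (hx : 0 ≤ x) (hXmax : ∀ i, x + h i ≤ X) (i₀ : Fin j)
    {p : ℕ × (Fin j → ℕ)} (hp : p ∈ tuples k x y X h) : 1 ≤ X := by
  obtain ⟨⟨hn, -⟩, hdvd, -⟩ := mem_tuples.mp hp
  have h1 : (1 : ℤ) ≤ p.1 + h i₀ := (hdvd i₀).1
  exact le_trans (by exact_mod_cast h1) (cast_add_le_of_mem_Icc hx hXmax hn i₀)

theorem card_filter_fst_eq_le (hk : k ≠ 0) (hx : 0 ≤ x) (hXmax : ∀ i, x + h i ≤ X) {D : ℝ}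
    (hD0 : 0 ≤ D) (hD : ∀ m : ℕ, 0 < m → (m : ℝ) ≤ X → (#m.divisors : ℝ) ≤ D) (n : ℕ) :
    (#{p ∈ tuples k x y X h | p.1 = n} : ℝ) ≤ D ^ j := by
  rcases Finset.eq_empty_or_nonempty {p ∈ tuples k x y X h | p.1 = n} with hempty | ⟨p₀, hp₀⟩
  · rw [hempty, card_empty, Nat.cast_zero]
    positivity
  obtain ⟨hp₀S, rfl⟩ := mem_filter.mp hp₀
  obtain ⟨⟨hn, -⟩, hdvd₀, -⟩ := mem_tuples.mp hp₀S
  have hmaps : ∀ p ∈ {p ∈ tuples k x y X h | p.1 = p₀.1},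
      p.2 ∈ Fintype.piFinset fun i => ((p₀.1 : ℤ) + h i).natAbs.divisors := by
    intro p hp
    obtain ⟨hpS, hp1⟩ := mem_filter.mp hp
    refine Fintype.mem_piFinset.mpr fun i =>
      Nat.mem_divisors.mpr ⟨?_, by have := (hdvd₀ i).1; omega⟩
    rw [← Int.natCast_dvd, ← hp1]
    exact (dvd_pow_self _ hk).trans ((mem_tuples.mp hpS).2.1 i).2
  have hinj :
      Set.InjOn Prod.snd (↑{p ∈ tuples k x y X h | p.1 = p₀.1} : Set (ℕ × (Fin j → ℕ))) :=
    fun p hp q hq hpq => Prod.ext ((mem_filter.mp hp).2.trans (mem_filter.mp hq).2.symm) hpq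
  calc (#{p ∈ tuples k x y X h | p.1 = p₀.1} : ℝ)
      ≤ ∏ i, (#((p₀.1 : ℤ) + h i).natAbs.divisors : ℝ) := by
        exact_mod_cast (card_le_card_of_injOn _ hmaps hinj).trans (Fintype.card_piFinset _).le
    _ ≤ ∏ _i : Fin j, D := by
        refine prod_le_prod (fun _ _ => by positivity) fun i _ =>
          hD _ (by have := (hdvd₀ i).1; omega) ?_
        rw [Nat.cast_natAbs, Int.cast_abs, abs_of_pos (by exact_mod_cast (hdvd₀ i).1)]
        exact cast_add_le_of_mem_Icc hx hXmax hn i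
    _ = D ^ j := by rw [prod_const, card_univ, Fintype.card_fin]

theorem card_filter_pow_dvd_le (hx : 0 ≤ x) (hX : 0 ≤ X) (hXmax : ∀ i, x + h i ≤ X)
    (i₀ : Fin j) {e : Fin j → ℕ} (he : ∀ i, 0 < e i)
    (hcop : Pairwise fun i i' => Nat.Coprime (e i) (e i')) :
    (#((Icc 1 ⌊x⌋₊).filter fun n : ℕ =>
        ∀ i, 0 < (n : ℤ) + h i ∧ ((e i : ℤ)) ^ k ∣ (n : ℤ) + h i) : ℝ) ≤
      X / ∏ i, (e i : ℝ) ^ k + 1 := by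
  set N := (Icc 1 ⌊x⌋₊).filter fun n : ℕ =>
    ∀ i, 0 < (n : ℤ) + h i ∧ ((e i : ℤ)) ^ k ∣ (n : ℤ) + h i
  have hQ : 0 < ∏ i, (e i : ℤ) ^ k := prod_pos fun i _ => pow_pos (by exact_mod_cast he i) k
  have hinj : Function.Injective fun n : ℕ => (n : ℤ) + h i₀ :=
    (add_left_injective (h i₀)).comp Nat.cast_injective
  have hcard := Int.card_le_div_add_one_of_modEq (s := N.image fun n : ℕ => (n : ℤ) + h i₀)
    (Int.floor_nonneg.mpr hX) hQ ?_ ?_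
  · rw [card_image_of_injective N hinj] at hcard
    refine hcard.trans ?_
    push_cast
    gcongr
    simpa using Int.floor_le X
  · simp only [mem_image, mem_Ioc, forall_exists_index, and_imp]
    rintro _ n hn rfl
    obtain ⟨hnx, hndvd⟩ := mem_filter.mp hn
    exact ⟨(hndvd i₀).1, Int.le_floor.mpr (cast_add_le_of_mem_Icc hx hXmax hnx i₀)⟩
  · simp only [mem_image, forall_exists_index, and_imp]
    rintro _ n hn rfl _ n' hn' rfl
    refine Int.modEq_iff_dvd.mpr (Fintype.prod_dvd_of_coprime ?_ fun i => ?_)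
    · exact fun i i' hii' => (Nat.isCoprime_iff_coprime.mpr (hcop hii')).pow
    · have hdvd := dvd_sub ((mem_filter.mp hn').2 i).2 ((mem_filter.mp hn).2 i).2
      rwa [add_sub_add_right_eq_sub, ← add_sub_add_right_eq_sub _ _ (h i₀)] at hdvd

theorem card_filter_dvd_snd_le (hk : k ≠ 0) (hx : 0 ≤ x) (hX : 0 ≤ X)
    (hXmax : ∀ i, x + h i ≤ X) {D : ℝ} (hD0 : 0 ≤ D)
    (hD : ∀ m : ℕ, 0 < m → (m : ℝ) ≤ X → (#m.divisors : ℝ) ≤ D) (i₀ : Fin j)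
    {e : Fin j → ℕ} (he : ∀ i, 0 < e i) (hcop : Pairwise fun i i' => Nat.Coprime (e i) (e i')) :
    (#{p ∈ tuples k x y X h | ∀ i, e i ∣ p.2 i} : ℝ) ≤ (X / ∏ i, (e i : ℝ) ^ k + 1) * D ^ j := by
  refine (card_le_card_mul_of_card_fiber_le (f := Prod.fst) (fun p hp => ?_) fun n _ => ?_).trans
    (mul_le_mul_of_nonneg_right (card_filter_pow_dvd_le hx hX hXmax i₀ he hcop) (by positivity))
  · obtain ⟨hpS, hep⟩ := mem_filter.mp hp
    obtain ⟨⟨hn, -⟩, hdvd, -⟩ := mem_tuples.mp hpS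
    refine mem_filter.mpr ⟨hn, fun i => ⟨(hdvd i).1, (pow_dvd_pow_of_dvd ?_ k).trans (hdvd i).2⟩⟩
    exact Int.natCast_dvd_natCast.mpr (hep i)
  · exact (Nat.cast_le.mpr (card_le_card (filter_subset_filter _ (filter_subset _ _)))).trans
      (card_filter_fst_eq_le hk hx hXmax hD0 hD n)

theorem add_one_le_of_mem_Ioc {T u : ℝ} (hk : 1 ≤ k) (hy : 0 < y) (hT : 0 < T)
    (hTX : T ^ (k + 1) = X) (hu : (y < u ∧ u ^ k ≤ X) ∨ u ∈ Set.Ioc T (T ^ 2)) :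
    X / u ^ k + 1 ≤ 2 * (X / y ^ (k - 1) + T ^ 2) * u⁻¹ := by
  have hX : 0 ≤ X := hTX ▸ by positivity
  have hdiv_le : ∀ v, 0 < v → v ≤ u → X / u ^ k ≤ X / v ^ (k - 1) * u⁻¹ := by
    intro v hv hvu
    have hu0 : 0 < u := hv.trans_le hvu
    rw [← pow_sub_one_mul (by omega : k ≠ 0), ← div_div, div_eq_mul_inv _ u]
    gcongr
  have hTX' : X / T ^ (k - 1) = T ^ 2 := by
    rw [← hTX, show k + 1 = k - 1 + 2 by omega, pow_add, mul_div_cancel_left₀ _ (by positivity)]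
  rcases hu with ⟨hyu, huX⟩ | ⟨hTu, huT⟩
  · have hu0 : 0 < u := hy.trans hyu
    have h1 : 1 ≤ X / u ^ k := (one_le_div (by positivity)).mpr huX
    have h2 := hdiv_le y hy hyu.le
    have h3 : 0 ≤ T ^ 2 * u⁻¹ := by positivity
    linarith
  · have hu0 : 0 < u := hT.trans hTu
    have h1 : 1 ≤ T ^ 2 * u⁻¹ := by rw [← div_eq_mul_inv]; exact (one_le_div hu0).mpr huT
    have h2 := hdiv_le T hT hTu.le
    rw [hTX'] at h2
    have h3 : 0 ≤ X / y ^ (k - 1) * u⁻¹ := by positivity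
    linarith

open scoped Classical in
noncomputable def admissible (k : ℕ) (y X T : ℝ) : Finset (Fin j → ℕ) :=
  (Fintype.piFinset fun _ => Icc 1 ⌊X⌋₊).filter fun e =>
    (Pairwise fun i i' => Nat.Coprime (e i) (e i')) ∧
      ((y < ∏ i, (e i : ℝ) ∧ (∏ i, (e i : ℝ)) ^ k ≤ X) ∨ ∏ i, (e i : ℝ) ∈ Set.Ioc T (T ^ 2))

theorem exists_mem_admissible_dvd (hk : 1 ≤ k) (hx : 0 ≤ x) (hXmax : ∀ i, x + h i ≤ X) {T : ℝ}
    (hT : 1 ≤ T) (hTX : T ^ (k + 1) = X) {p : ℕ × (Fin j → ℕ)} (hp : p ∈ tuples k x y X h) :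
    ∃ e ∈ admissible k y X T, ∀ i, e i ∣ p.2 i := by
  classical
  obtain ⟨⟨-, hdIcc⟩, -, hcop, hy⟩ := mem_tuples.mp hp
  by_cases hsmall : (∏ i, (p.2 i : ℝ)) ^ k ≤ X
  · exact ⟨p.2, mem_filter.mpr ⟨Fintype.mem_piFinset.mpr hdIcc, fun i i' hii' => hcop i i' hii',
      Or.inl ⟨hy, hsmall⟩⟩, fun i => dvd_rfl⟩
  have hdT : ∀ i, (p.2 i : ℝ) ≤ T ^ 2 := by
    refine fun i => le_of_pow_le_pow_left₀ (by omega : k ≠ 0) (by positivity) ?_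
    calc (p.2 i : ℝ) ^ k ≤ T ^ (k + 1) := hTX ▸ pow_le_of_mem_tuples hx hXmax hp i
      _ ≤ (T ^ 2) ^ k := by rw [← pow_mul]; exact pow_le_pow_right₀ hT (by omega)
  have hTd : T < ∏ i, (p.2 i : ℝ) := by
    refine lt_of_pow_lt_pow_left₀ k (by positivity) ?_
    calc T ^ k ≤ T ^ (k + 1) := pow_le_pow_right₀ hT (by omega)
      _ < (∏ i, (p.2 i : ℝ)) ^ k := hTX ▸ not_le.mp hsmall
  obtain ⟨I, -, hI⟩ :=
    exists_subset_prod_mem_Ioc hT (fun i _ => by positivity) (fun i _ => hdT i) hTd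
  set e : Fin j → ℕ := fun i => if i ∈ I then p.2 i else 1
  have hed : ∀ i, e i ∣ p.2 i := fun i => by by_cases hi : i ∈ I <;> simp [e, hi]
  refine ⟨e, mem_filter.mpr ⟨Fintype.mem_piFinset.mpr fun i => ?_, fun i i' hii' => ?_, ?_⟩, hed⟩
  · have := mem_Icc.mp (hdIcc i)
    by_cases hi : i ∈ I <;> simp only [e, hi, ↓reduceIte, mem_Icc] <;> omega
  · exact ((hcop i i' hii').coprime_dvd_left (hed i)).coprime_dvd_right (hed i')
  · right
    simpa [e, Nat.cast_ite, prod_ite_mem] using hI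

theorem card_tuples_le_sum_inv (hk : 1 ≤ k) (hx : 0 ≤ x) (hy : 0 < y) (hXmax : ∀ i, x + h i ≤ X)
    (i₀ : Fin j) {T : ℝ} (hT : 1 ≤ T) (hTX : T ^ (k + 1) = X) {D : ℝ} (hD0 : 0 ≤ D)
    (hD : ∀ m : ℕ, 0 < m → (m : ℝ) ≤ X → (#m.divisors : ℝ) ≤ D) :
    (#(tuples k x y X h) : ℝ) ≤
      2 * (X / y ^ (k - 1) + T ^ 2) * D ^ j * (∑ d ∈ Icc 1 ⌊X⌋₊, (d : ℝ)⁻¹) ^ j := by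
  classical
  have hX : 0 ≤ X := hTX ▸ by positivity
  set c := 2 * (X / y ^ (k - 1) + T ^ 2) * D ^ j
  have hcover : tuples k x y X h ⊆
      (admissible k y X T).biUnion fun e => {p ∈ tuples k x y X h | ∀ i, e i ∣ p.2 i} := by
    intro p hp
    obtain ⟨e, he, hed⟩ := exists_mem_admissible_dvd hk hx hXmax hT hTX hp
    exact mem_biUnion.mpr ⟨e, he, mem_filter.mpr ⟨hp, hed⟩⟩
  have hfiber : ∀ e ∈ admissible k y X T,
      (#{p ∈ tuples k x y X h | ∀ i, e i ∣ p.2 i} : ℝ) ≤ c * ∏ i, (e i : ℝ)⁻¹ := by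
    intro e he
    obtain ⟨heIcc, hcop, hu⟩ := mem_filter.mp he
    have he0 : ∀ i, 0 < e i := fun i => (mem_Icc.mp (Fintype.mem_piFinset.mp heIcc i)).1
    calc (#{p ∈ tuples k x y X h | ∀ i, e i ∣ p.2 i} : ℝ)
        ≤ (X / (∏ i, (e i : ℝ)) ^ k + 1) * D ^ j := by
          rw [← prod_pow]
          exact card_filter_dvd_snd_le (by omega) hx hX hXmax hD0 hD i₀ he0 hcop
      _ ≤ 2 * (X / y ^ (k - 1) + T ^ 2) * (∏ i, (e i : ℝ))⁻¹ * D ^ j := by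
          gcongr
          exact add_one_le_of_mem_Ioc hk hy (by positivity) hTX hu
      _ = c * ∏ i, (e i : ℝ)⁻¹ := by rw [prod_inv_distrib]; ring
  calc (#(tuples k x y X h) : ℝ)
      ≤ ∑ e ∈ admissible k y X T, (#{p ∈ tuples k x y X h | ∀ i, e i ∣ p.2 i} : ℝ) := by
        exact_mod_cast (card_le_card hcover).trans card_biUnion_le
    _ ≤ ∑ e ∈ admissible k y X T, c * ∏ i, (e i : ℝ)⁻¹ := sum_le_sum hfiber
    _ ≤ ∑ e ∈ Fintype.piFinset (fun _ : Fin j => Icc 1 ⌊X⌋₊), c * ∏ i, (e i : ℝ)⁻¹ :=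
        sum_le_sum_of_subset_of_nonneg (filter_subset _ _) fun _ _ _ => by positivity
    _ = c * (∑ d ∈ Icc 1 ⌊X⌋₊, (d : ℝ)⁻¹) ^ j := by
        rw [← mul_sum, ← prod_univ_sum (fun _ : Fin j => Icc 1 ⌊X⌋₊) fun _ d => (d : ℝ)⁻¹,
          prod_const, card_univ, Fintype.card_fin]

theorem card_tuples_le_mul_pow (hk : k ≠ 0) (hx : 0 ≤ x) (hXmax : ∀ i, x + h i ≤ X) {D : ℝ}
    (hD0 : 0 ≤ D) (hD : ∀ m : ℕ, 0 < m → (m : ℝ) ≤ X → (#m.divisors : ℝ) ≤ D) :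
    (#(tuples k x y X h) : ℝ) ≤ x * D ^ j := by
  refine (card_le_card_mul_of_card_fiber_le (f := Prod.fst) (t := Icc 1 ⌊x⌋₊)
    (fun p hp => (mem_tuples.mp hp).1.1) fun n _ =>
      card_filter_fst_eq_le hk hx hXmax hD0 hD n).trans ?_
  gcongr
  simpa using Nat.floor_le hx

theorem card_tuples_le_of_le_pow (hk : 1 ≤ k) (hx : 1 ≤ x) (hy : 0 < y)
    (hXmax : ∀ i, x + h i ≤ X) (i₀ : Fin j) (hX : 1 ≤ X) (hXx : X ≤ x ^ (k + 1)) {δ ε C : ℝ}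
    (hδ : 0 < δ) (hδε : 2 * j * (k + 1) * δ ≤ ε) (hC : 0 ≤ C)
    (hD : ∀ m : ℕ, 0 < m → (m : ℝ) ≤ X → (#m.divisors : ℝ) ≤ C * X ^ δ) :
    (#(tuples k x y X h) : ℝ) ≤
      2 * (C * (1 + 1 / δ)) ^ j * x ^ ε * (X * y ^ (1 - (k : ℝ)) + X ^ (2 / ((k : ℝ) + 1))) := by
  set T := X ^ (1 / ((k : ℝ) + 1))
  have hT : 1 ≤ T := Real.one_le_rpow hX (by positivity)
  have hTX : T ^ (k + 1) = X := by
    rw [← Real.rpow_natCast, ← Real.rpow_mul (by positivity)]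
    push_cast
    rw [one_div_mul_cancel (by positivity), Real.rpow_one]
  have hT2 : T ^ 2 = X ^ (2 / ((k : ℝ) + 1)) := by
    rw [← Real.rpow_natCast, ← Real.rpow_mul (by positivity)]
    congr 1
    push_cast
    ring
  have hy' : X / y ^ (k - 1) = X * y ^ (1 - (k : ℝ)) := by
    rw [div_eq_mul_inv, ← Real.rpow_natCast, ← Real.rpow_neg hy.le]
    push_cast [Nat.cast_sub hk]
    ring_nf
  have hH : ∑ d ∈ Icc 1 ⌊X⌋₊, (d : ℝ)⁻¹ ≤ (1 + 1 / δ) * X ^ δ :=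
    (sum_Icc_inv_le_mul_rpow hδ _).trans (by gcongr; exact Nat.floor_le (by positivity))
  have hXδ : (X ^ δ * X ^ δ) ^ j ≤ x ^ ε := calc
    (X ^ δ * X ^ δ) ^ j = X ^ ((δ + δ) * j) := by
      rw [← Real.rpow_add (by positivity), Real.rpow_mul_natCast (by positivity)]
    _ ≤ (x ^ (k + 1)) ^ ((δ + δ) * j) := by gcongr
    _ = x ^ ((k + 1) * ((δ + δ) * j)) := by
      rw [← Real.rpow_natCast, ← Real.rpow_mul (by positivity)]
      push_cast
      rfl
    _ ≤ x ^ ε := Real.rpow_le_rpow_of_exponent_le hx (by linarith)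
  calc (#(tuples k x y X h) : ℝ)
      ≤ 2 * (X / y ^ (k - 1) + T ^ 2) * (C * X ^ δ) ^ j * (∑ d ∈ Icc 1 ⌊X⌋₊, (d : ℝ)⁻¹) ^ j :=
        card_tuples_le_sum_inv hk (by linarith) hy hXmax i₀ hT hTX (by positivity) hD
    _ ≤ 2 * (X / y ^ (k - 1) + T ^ 2) * (C * X ^ δ) ^ j * ((1 + 1 / δ) * X ^ δ) ^ j := by
        gcongr
    _ = 2 * (C * (1 + 1 / δ)) ^ j * (X ^ δ * X ^ δ) ^ j * (X / y ^ (k - 1) + T ^ 2) := by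
        simp only [mul_pow]; ring
    _ ≤ _ := by rw [hy', hT2]; gcongr

theorem card_tuples_le_of_pow_lt (hk : k ≠ 0) (hx : 0 ≤ x) (hXmax : ∀ i, x + h i ≤ X)
    (hX : 1 ≤ X) (hXx : x ^ (k + 1) < X) {δ C : ℝ} (hδj : j * δ ≤ 1 / ((k : ℝ) + 1))
    (hC : 0 ≤ C) (hD : ∀ m : ℕ, 0 < m → (m : ℝ) ≤ X → (#m.divisors : ℝ) ≤ C * X ^ δ) :
    (#(tuples k x y X h) : ℝ) ≤ C ^ j * X ^ (2 / ((k : ℝ) + 1)) := by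
  have hxX : x ≤ X ^ (1 / ((k : ℝ) + 1)) := by
    calc x = (x ^ (k + 1)) ^ (((k + 1 : ℕ) : ℝ)⁻¹) :=
          (Real.pow_rpow_inv_natCast hx (by omega)).symm
      _ ≤ X ^ (1 / ((k : ℝ) + 1)) := by push_cast; rw [one_div]; gcongr
  calc (#(tuples k x y X h) : ℝ) ≤ x * (C * X ^ δ) ^ j :=
        card_tuples_le_mul_pow hk hx hXmax (by positivity) hD
    _ = C ^ j * (x * X ^ (δ * j)) := by
        rw [mul_pow, Real.rpow_mul_natCast (by positivity)]; ring
    _ ≤ C ^ j * (X ^ (1 / ((k : ℝ) + 1)) * X ^ (δ * j)) := by gcongr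
    _ ≤ C ^ j * X ^ (2 / ((k : ℝ) + 1)) := by
        rw [← Real.rpow_add (by positivity)]
        gcongr
        linarith [show (2 : ℝ) / (k + 1) = 1 / (k + 1) + 1 / (k + 1) by ring]

theorem card_tuples_le_rpow (hk : 1 ≤ k) (hx : 1 < x) (hy : 0 < y) (hpos : ∀ i, 0 < x + h i)
    (hXmax : ∀ i, x + h i ≤ X) (i₀ : Fin j) {δ ε C : ℝ} (hδ : 0 < δ)
    (hδε : 2 * j * (k + 1) * δ ≤ min ε 1) (hC : 1 ≤ C)
    (hτ : ∀ m : ℕ, m ≠ 0 → (#m.divisors : ℝ) ≤ C * (m : ℝ) ^ δ) :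
    (#(tuples k x y X h) : ℝ) ≤
      2 * (C * (1 + 1 / δ)) ^ j * x ^ ε * (X * y ^ (1 - (k : ℝ)) + X ^ (2 / ((k : ℝ) + 1))) := by
  have hX0 : 0 < X := (hpos i₀).trans_le (hXmax i₀)
  have hC0 : 0 ≤ C := zero_le_one.trans hC
  rcases (tuples k x y X h).eq_empty_or_nonempty with hS | ⟨p, hp⟩
  · rw [hS, card_empty, Nat.cast_zero]
    positivity
  have hX1 : 1 ≤ X := one_le_of_mem_tuples (by linarith) hXmax i₀ hp
  have hD : ∀ m : ℕ, 0 < m → (m : ℝ) ≤ X → (#m.divisors : ℝ) ≤ C * X ^ δ := fun m hm hmX =>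
    (hτ m hm.ne').trans (by gcongr)
  by_cases hXx : X ≤ x ^ (k + 1)
  · exact card_tuples_le_of_le_pow hk hx.le hy hXmax i₀ hX1 hXx hδ
      (hδε.trans (min_le_left _ _)) hC0 hD
  have hδj : j * δ ≤ 1 / ((k : ℝ) + 1) := by
    rw [le_div_iff₀ (by positivity)]
    nlinarith [min_le_right ε 1]
  have hCj : C ^ j ≤ 2 * (C * (1 + 1 / δ)) ^ j * x ^ ε := calc
    C ^ j ≤ (C * (1 + 1 / δ)) ^ j := by gcongr; exact le_mul_of_one_le_right hC0 (by simp [hδ.le])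
    _ ≤ 2 * (C * (1 + 1 / δ)) ^ j * x ^ ε := by
      have := Real.one_le_rpow hx.le (le_min_iff.mp ((by positivity : (0 : ℝ) ≤ _).trans hδε)).1
      nlinarith [pow_nonneg (mul_nonneg hC0 (by positivity : (0 : ℝ) ≤ 1 + 1 / δ)) j]
  calc (#(tuples k x y X h) : ℝ) ≤ C ^ j * X ^ (2 / ((k : ℝ) + 1)) :=
        card_tuples_le_of_pow_lt (by omega) (by linarith) hXmax hX1 (not_le.mp hXx) hδj hC0 hD
    _ ≤ _ := mul_le_mul hCj (le_add_of_nonneg_left (by positivity)) (by positivity) (by positivity)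

end Mirsky

/-- Mirsky's lemma: the number of tuples (n, d_1,…,d_j) with n ≤ x, d_i^k ∣ n + h_i,
the d_i pairwise coprime and ∏ d_i > y is O_{ε,j}(x^ε (X y^{1-k} + X^{2/(k+1)})),
where X = max_i (x + h_i). -/
theorem stmt_6 (k j : ℕ) (hk : 2 ≤ k) (hj : 1 ≤ j) (ε : ℝ) (hε : 0 < ε) :
    ∃ C : ℝ, 0 < C ∧ ∀ (x y X : ℝ) (h : Fin j → ℤ),
      1 < x → 1 ≤ y → Function.Injective h → (∀ i, 0 < x + (h i : ℝ)) →
      IsGreatest (Set.range fun i => x + (h i : ℝ)) X →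
      (((Finset.Icc 1 ⌊x⌋₊ ×ˢ Fintype.piFinset fun _ : Fin j => Finset.Icc 1 ⌊X⌋₊).filter
          fun nd => (∀ i, 0 < (nd.1 : ℤ) + h i ∧ ((nd.2 i : ℤ)) ^ k ∣ (nd.1 : ℤ) + h i) ∧
            (∀ i i', i ≠ i' → Nat.Coprime (nd.2 i) (nd.2 i')) ∧
            y < ∏ i, (nd.2 i : ℝ)).card : ℝ)
        ≤ C * x ^ ε * (X * y ^ (1 - (k : ℝ)) + X ^ (2 / ((k : ℝ) + 1))) := by
  set δ := min ε 1 / (2 * j * (k + 1))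
  have hδ : 0 < δ := div_pos (lt_min hε one_pos) (by positivity)
  have hδε : 2 * j * (k + 1) * δ = min ε 1 := mul_div_cancel₀ _ (by positivity)
  obtain ⟨C, hC, hτ⟩ := Nat.card_divisors_le_mul_rpow hδ
  refine ⟨2 * (C * (1 + 1 / δ)) ^ j, by positivity, fun x y X h hx hy _ hpos hX => ?_⟩
  exact Mirsky.card_tuples_le_rpow (by omega) hx (by linarith) hpos (fun i => hX.2 ⟨i, rfl⟩)
    ⟨0, hj⟩ hδ hδε.le hC hτ
end

section
/- For any real X > 0, positive integer q, j ≥ 1, and any function A: ℤ^j → ℝ of the form A(h_1,...,h_j) depending only on the differences h_i − h_j (i.e. translation-invariant) with A summable on the relevant range, one has ∑_{f ∈ ℤ^{j−1}} A(f_1,...,f_{j−1},0)·|I(X,q;(f,0))| = q ∫_0^1 ∑_{h ∈ ℤ^j, −u < h_i ≤ X/q − u ∀i} A(h) du, where I(X,q;h) = ∩_{i=1}^{j} (−h_i q, X − h_i q]. -/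
/-!
With `W(h) = window (X/q) h = {u | h + u ∈ (0, X/q]^j}` we have `I(X,q;h) = q • W(h)`, and
the integrand on the right is `∑_h A(h) 1_{W(h)}(u)`, a finite sum for each `u`. By Tonelli the
right side is `q ∑_h A(h) |W(h) ∩ (0,1]|`. Every `h` is uniquely `(f,0) + t(1,…,1)` with `t ∈ ℤ`, and then
`A(h) = A(f,0)` while `W(h) = W(f,0) - t`; as the translates `(0,1] + t` tile `ℝ`, summing over `t`
leaves `∑_f A(f,0) |W(f,0)|`, which is the left side.
-/

open MeasureTheory Set
open scoped ENNReal

section Window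

variable {ι : Type*}

def window (c : ℝ) (h : ι → ℤ) : Set ℝ := {u | ∀ i, -u < h i ∧ (h i : ℝ) ≤ c - u}

theorem window_eq_iInter_Ioc (c : ℝ) (h : ι → ℤ) :
    window c h = ⋂ i, Ioc (-(h i : ℝ)) (c - h i) := by
  ext u
  simp only [mem_iInter, mem_Ioc, neg_lt]
  exact forall_congr' fun _ => and_congr_right' le_sub_comm

theorem measurableSet_window [Countable ι] (c : ℝ) (h : ι → ℤ) : MeasurableSet (window c h) :=
  window_eq_iInter_Ioc c h ▸ MeasurableSet.iInter fun _ => measurableSet_Ioc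

theorem volume_window_lt_top [Nonempty ι] (c : ℝ) (h : ι → ℤ) : volume (window c h) < ⊤ :=
  window_eq_iInter_Ioc c h ▸
    (measure_mono (iInter_subset _ (Classical.arbitrary ι))).trans_lt measure_Ioc_lt_top

theorem window_add_const (c : ℝ) (h : ι → ℤ) (t : ℤ) :
    window c (fun i => h i + t) = (· + (t : ℝ)) ⁻¹' window c h := by
  simp only [window_eq_iInter_Ioc, preimage_iInter, preimage_add_const_Ioc, Int.cast_add, neg_add',
    sub_add_eq_sub_sub]

theorem finite_setOf_mem_window [Finite ι] (c u : ℝ) : {h : ι → ℤ | u ∈ window c h}.Finite := by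
  have : {h : ι → ℤ | u ∈ window c h} = univ.pi fun _ => Ioc ⌊-u⌋ ⌊c - u⌋ := by
    ext h
    simp [window, Int.floor_lt, Int.le_floor]
  rw [this]
  exact Finite.pi fun _ => finite_Ioc _ _

theorem iInter_Ioc_mul_eq_preimage_window {X q : ℝ} (hq : 0 < q) (h : ι → ℤ) :
    ⋂ i, Ioc (-((h i : ℝ) * q)) (X - h i * q) = (q⁻¹ * ·) ⁻¹' window (X / q) h := by
  simp only [window_eq_iInter_Ioc, preimage_iInter, preimage_const_mul_Ioc₀ _ _ (inv_pos.2 hq),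
    div_inv_eq_mul, sub_mul, div_mul_cancel₀ X hq.ne', neg_mul]

theorem volume_iInter_Ioc_mul {X q : ℝ} (hq : 0 < q) (h : ι → ℤ) :
    volume (⋂ i, Ioc (-((h i : ℝ) * q)) (X - h i * q)) =
      ENNReal.ofReal q * volume (window (X / q) h) := by
  rw [iInter_Ioc_mul_eq_preimage_window hq, Real.volume_preimage_mul_left (inv_ne_zero hq.ne'),
    inv_inv, abs_of_pos hq]

end Window

theorem tsum_volume_preimage_add_intCast_inter_Ioc {s : Set ℝ} (hs : MeasurableSet s) :
    ∑' n : ℤ, volume ((· + (n : ℝ)) ⁻¹' s ∩ Ioc 0 1) = volume s := by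
  calc ∑' n : ℤ, volume ((· + (n : ℝ)) ⁻¹' s ∩ Ioc 0 1)
      = ∑' n : ℤ, volume (s ∩ Ioc (n : ℝ) (n + 1)) := by
        refine tsum_congr fun n => ?_
        conv_rhs => rw [← measure_preimage_add_right volume (n : ℝ), preimage_inter,
          preimage_add_const_Ioc, sub_self, add_sub_cancel_left]
    _ = volume (⋃ n : ℤ, s ∩ Ioc (n : ℝ) (n + 1)) :=
        (measure_iUnion (fun _ _ hij => (pairwise_disjoint_Ioc_intCast ℝ hij).mono
          inter_subset_right inter_subset_right) fun _ => hs.inter measurableSet_Ioc).symm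
    _ = volume s := by rw [← inter_iUnion, iUnion_Ioc_intCast, inter_univ]

def snocZeroAddEquiv (G : Type*) [AddGroup G] (m : ℕ) :
    (Fin (m + 1) → G) ≃ (Fin m → G) × G where
  toFun h := (fun i => h i.castSucc - h (Fin.last m), h (Fin.last m))
  invFun p i := (Fin.snoc p.1 (0 : G) : Fin (m + 1) → G) i + p.2
  left_inv h := by
    funext i
    induction i using Fin.lastCases <;> simp
  right_inv p := by ext <;> simp

theorem ENNReal.tsum_eq_tsum_snoc_zero_add {G : Type*} [AddGroup G] {m : ℕ}
    (F : (Fin (m + 1) → G) → ℝ≥0∞) :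
    ∑' h, F h =
      ∑' (f : Fin m → G) (t : G), F (fun i => (Fin.snoc f (0 : G) : Fin (m + 1) → G) i + t) := by
  rw [← (snocZeroAddEquiv G m).symm.tsum_eq, ENNReal.tsum_prod']
  rfl

theorem tsum_mul_volume_inter_Ioc_zero_one {m : ℕ} (a : (Fin (m + 1) → ℤ) → ℝ≥0∞)
    (ha : ∀ h t, a (fun i => h i + t) = a h) (S : (Fin (m + 1) → ℤ) → Set ℝ)
    (hS : ∀ h t, S (fun i => h i + t) = (· + (t : ℝ)) ⁻¹' S h) (hSm : ∀ h, MeasurableSet (S h)) :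
    ∑' h, a h * volume (S h ∩ Ioc 0 1) =
      ∑' f : Fin m → ℤ, a (Fin.snoc f (0 : ℤ)) * volume (S (Fin.snoc f (0 : ℤ))) := by
  rw [ENNReal.tsum_eq_tsum_snoc_zero_add]
  refine tsum_congr fun f => ?_
  simp only [ha, hS, ENNReal.tsum_mul_left, tsum_volume_preimage_add_intCast_inter_Ioc (hSm _)]

theorem lintegral_tsum_indicator_const {α κ : Type*} [MeasurableSpace α] [Countable κ]
    {μ : Measure α} {S : κ → Set α} (hS : ∀ i, MeasurableSet (S i)) (a : κ → ℝ≥0∞) (s : Set α) :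
    ∫⁻ x in s, ∑' i, (S i).indicator (fun _ => a i) x ∂μ = ∑' i, a i * μ (S i ∩ s) := by
  rw [lintegral_tsum fun i => (measurable_const.indicator (hS i)).aemeasurable]
  simp only [lintegral_indicator_const (hS _), Measure.restrict_apply (hS _)]

theorem tsum_indicator_const_ne_top {α κ : Type*} {S : κ → Set α} {a : κ → ℝ≥0∞} {x : α}
    (hx : {i | x ∈ S i}.Finite) (ha : ∀ i, a i ≠ ⊤) :
    ∑' i, (S i).indicator (fun _ => a i) x ≠ ⊤ := by
  rw [tsum_eq_sum (s := hx.toFinset) fun i hi => indicator_of_notMem (by simpa using hi) _]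
  exact ENNReal.sum_ne_top.2 fun i _ =>
    ne_top_of_le_ne_top (ha i) (indicator_le (fun _ _ => le_rfl) x)

theorem integral_tsum_ite {α κ : Type*} [MeasurableSpace α] [Countable κ] {μ : Measure α}
    {P : κ → α → Prop} [∀ i, DecidablePred (P i)] (hP : ∀ i, MeasurableSet {x | P i x})
    (hfin : ∀ x, {i | P i x}.Finite) {A : κ → ℝ} (hA : ∀ i, 0 ≤ A i) (s : Set α) :
    ∫ x in s, ∑' i, (if P i x then A i else 0) ∂μ =
      (∑' i, ENNReal.ofReal (A i) * μ ({x | P i x} ∩ s)).toReal := by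
  have toReal_tsum (x : α) : ∑' i, (if P i x then A i else 0) =
      (∑' i, {x | P i x}.indicator (fun _ => ENNReal.ofReal (A i)) x).toReal := by
    rw [ENNReal.tsum_toReal_eq fun i => ?_]
    · refine tsum_congr fun i => ?_
      by_cases hx : P i x
      · rw [if_pos hx, indicator_of_mem (s := {x | P i x}) hx, ENNReal.toReal_ofReal (hA i)]
      · rw [if_neg hx, indicator_of_notMem (s := {x | P i x}) hx, ENNReal.toReal_zero]
    · exact ne_top_of_le_ne_top ENNReal.ofReal_ne_top (indicator_le (fun _ _ => le_rfl) x)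
  simp only [toReal_tsum]
  rw [integral_toReal (Measurable.tsum fun i => measurable_const.indicator (hP i)).aemeasurable
    (ae_of_all _ fun x =>
      (tsum_indicator_const_ne_top (hfin x) fun _ => ENNReal.ofReal_ne_top).lt_top),
    lintegral_tsum_indicator_const hP]

open MeasureTheory in
theorem stmt_12_general (X : ℝ) (q : ℕ) (hq : 0 < q) (m : ℕ)
    (A : (Fin (m + 1) → ℤ) → ℝ) (hA0 : ∀ h, 0 ≤ A h)
    (hAinv : ∀ (h : Fin (m + 1) → ℤ) (t : ℤ), A (fun i => h i + t) = A h) :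
    ∑' f : Fin m → ℤ, A (Fin.snoc f 0) *
        (volume (⋂ i, Set.Ioc (-(((Fin.snoc f (0 : ℤ) : Fin (m + 1) → ℤ) i : ℝ) * q))
          (X - ((Fin.snoc f (0 : ℤ) : Fin (m + 1) → ℤ) i : ℝ) * q))).toReal
      = q * ∫ u in (0 : ℝ)..1, ∑' h : Fin (m + 1) → ℤ,
          (if ∀ i, -u < (h i : ℝ) ∧ (h i : ℝ) ≤ X / q - u then A h else 0) := by
  have hq' : (0 : ℝ) < q := by exact_mod_cast hq
  have hS := measurableSet_window (ι := Fin (m + 1)) (X / q)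
  calc _ = ∑' f : Fin m → ℤ, A (Fin.snoc f 0) *
          (ENNReal.ofReal q * volume (window (X / q) (Fin.snoc f (0 : ℤ)))).toReal := by
        simp_rw [volume_iInter_Ioc_mul hq']
    _ = q * (∑' f : Fin m → ℤ, ENNReal.ofReal (A (Fin.snoc f 0)) *
          volume (window (X / q) (Fin.snoc f (0 : ℤ)))).toReal := by
        rw [ENNReal.tsum_toReal_eq fun f => ENNReal.mul_ne_top ENNReal.ofReal_ne_top
          (volume_window_lt_top _ _).ne, ← tsum_mul_left]
        refine tsum_congr fun f => ?_
        rw [ENNReal.toReal_mul, ENNReal.toReal_mul, ENNReal.toReal_ofReal hq'.le,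
          ENNReal.toReal_ofReal (hA0 _)]
        ring
    _ = q * (∑' h, ENNReal.ofReal (A h) * volume (window (X / q) h ∩ Ioc 0 1)).toReal := by
        rw [tsum_mul_volume_inter_Ioc_zero_one _ (fun h t => by rw [hAinv]) _
          (window_add_const _) hS]
    _ = _ := by
        rw [intervalIntegral.integral_of_le zero_le_one,
          integral_tsum_ite hS (finite_setOf_mem_window _) hA0]
        rfl

open MeasureTheory in
/-- For a translation-invariant nonnegative A : ℤ^j → ℝ,
∑_{f ∈ ℤ^{j-1}} A(f,0) |I(X,q;(f,0))| = q ∫₀¹ ∑_{h ∈ ℤ^j, -u < h_i ≤ X/q - u} A(h) du,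
where I(X,q;h) = ∩_i (-h_i q, X - h_i q]. -/
theorem stmt_12 (X : ℝ) (hX : 0 < X) (q : ℕ) (hq : 0 < q) (m : ℕ)
    (A : (Fin (m + 1) → ℤ) → ℝ) (hA0 : ∀ h, 0 ≤ A h)
    (hAinv : ∀ (h : Fin (m + 1) → ℤ) (t : ℤ), A (fun i => h i + t) = A h) :
    ∑' f : Fin m → ℤ, A (Fin.snoc f 0) *
        (volume (⋂ i, Set.Ioc (-(((Fin.snoc f (0 : ℤ) : Fin (m + 1) → ℤ) i : ℝ) * q))
          (X - ((Fin.snoc f (0 : ℤ) : Fin (m + 1) → ℤ) i : ℝ) * q))).toReal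
      = q * ∫ u in (0 : ℝ)..1, ∑' h : Fin (m + 1) → ℤ,
          (if ∀ i, -u < (h i : ℝ) ∧ (h i : ℝ) ≤ X / q - u then A h else 0) :=
  stmt_12_general X q hq m A hA0 hAinv
end

section
/- Let N_d(X_1,X_2,q;h) be the number of integers n with X_1 < n ≤ X_2, gcd(n,q)=1, and ξ(n) ≡ 0 (mod d), where ξ(n) = ∏_i σ(n + h_i q) and σ(n) = ∏_{p^k | n} p. Then for squarefree d coprime to q, N_d = (φ(q)/q)(U_d/d^k)(X_2 − X_1) + O(τ(q) U_d), with U_d = ∏_{p|d} u_p(h) and τ the divisor function. -/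
/-!
Since `d` is squarefree, `d ∣ ξ(n)` says exactly that every prime `p ∣ d` has
`p^k ∣ n + h_i q` for some `i`. Möbius inversion over `e ∣ q` removes the condition
`gcd(n, q) = 1`; for each `e` the remaining condition (`e ∣ n` and `n mod p^k ∈ {-h_i q}` for
`p ∣ d`) depends only on `n mod e d^k`, and by the Chinese remainder theorem it singles out
exactly `U_d` residue classes, because `q` is invertible mod `p^k`. Each class meets
`(⌊X₁⌋, ⌊X₂⌋]` in `(X₂ - X₁)/(e d^k) + O(1)` integers, and `∑_{e ∣ q} μ(e)/e = φ(q)/q`.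
-/

open Finset ArithmeticFunction
open scoped Function ArithmeticFunction.Moebius Nat

theorem natCast_dvd_sig_iff {k : ℕ} (hk : k ≠ 0) {p : ℕ} (hp : p.Prime) (m : ℤ) :
    (p : ℤ) ∣ sig k m ↔ (p : ℤ) ^ k ∣ m := by
  rcases eq_or_ne m 0 with rfl | hm
  · simp [sig]
  rw [sig, if_neg hm, (Nat.prime_iff_prime_int.mp hp).dvd_finsetProd_iff]
  constructor
  · rintro ⟨r, hr, hpr⟩
    rw [mem_filter] at hr
    obtain rfl : p = r := (Nat.prime_dvd_prime_iff_eq hp (Nat.prime_of_mem_primeFactors hr.1)).mp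
      (Int.natCast_dvd_natCast.mp hpr)
    exact hr.2
  · intro hpk
    have hpm : p ∣ m.natAbs := Int.natCast_dvd.mp ((dvd_pow_self _ hk).trans hpk)
    exact ⟨p, mem_filter.mpr ⟨Nat.mem_primeFactors.mpr ⟨hp, hpm, by simpa using hm⟩, hpk⟩, dvd_rfl⟩

theorem natCast_dvd_prod_sig_iff {ι : Type*} [Fintype ι] {k : ℕ} (hk : k ≠ 0) {d : ℕ}
    (hd : Squarefree d) (f : ι → ℤ) :
    (d : ℤ) ∣ ∏ i, sig k (f i) ↔ ∀ p ∈ d.primeFactors, ∃ i, (p : ℤ) ^ k ∣ f i := by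
  have hprime (p : ℕ) (hp : p ∈ d.primeFactors) :
      (p : ℤ) ∣ ∏ i, sig k (f i) ↔ ∃ i, (p : ℤ) ^ k ∣ f i := by
    have hp := Nat.prime_of_mem_primeFactors hp
    simp [(Nat.prime_iff_prime_int.mp hp).dvd_finsetProd_iff, natCast_dvd_sig_iff hk hp]
  refine ⟨fun hdvd p hp => (hprime p hp).mp
    ((Int.natCast_dvd_natCast.mpr (Nat.dvd_of_mem_primeFactors hp)).trans hdvd), fun h => ?_⟩
  rw [Int.natCast_dvd, ← Nat.prod_primeFactors_of_squarefree hd]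
  exact prod_primes_dvd _ (fun p hp => (Nat.prime_of_mem_primeFactors hp).prime)
    fun p hp => Int.natCast_dvd.mp ((hprime p hp).mpr (h p hp))

theorem abs_intCast_floor_sub_floor_sub_lt_one {R : Type*} [Field R] [LinearOrder R]
    [IsStrictOrderedRing R] [FloorRing R] (x y : R) :
    |((⌊y⌋ - ⌊x⌋ : ℤ) : R) - (y - x)| < 1 := by
  have := Int.floor_le x
  have := Int.lt_floor_add_one x
  have := Int.floor_le y
  have := Int.lt_floor_add_one y
  rw [abs_sub_lt_iff]
  push_cast
  constructor <;> linarith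

theorem abs_card_Ioc_filter_intCast_eq_sub_lt {M : ℕ} [NeZero M] {a b : ℤ} (hab : a ≤ b)
    (x : ZMod M) : |(#{n ∈ Ioc a b | ((n : ℤ) : ZMod M) = x} : ℝ) - (b - a) / M| < 1 := by
  have hM : (0 : ℤ) < M := by exact_mod_cast Nat.pos_of_neZero M
  have hclass : ({n ∈ Ioc a b | ((n : ℤ) : ZMod M) = x} : Finset ℤ)
      = {n ∈ Ioc a b | n ≡ x.val [ZMOD M]} :=
    filter_congr fun n _ => by rw [← ZMod.intCast_eq_intCast_iff]; simp
  have hcard := Int.Ioc_filter_modEq_card a b hM x.val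
  rw [← hclass, max_eq_left (sub_nonneg.mpr (Int.floor_le_floor (by gcongr)))] at hcard
  push_cast at hcard
  have hQ : |(#{n ∈ Ioc a b | ((n : ℤ) : ZMod M) = x} : ℚ) - (b - a) / M| < 1 := by
    have key := abs_intCast_floor_sub_floor_sub_lt_one (((a : ℚ) - x.val) / M)
      (((b : ℚ) - x.val) / M)
    rw [← hcard, show ((b : ℚ) - x.val) / M - ((a : ℚ) - x.val) / M = ((b : ℚ) - a) / M by ring]
      at key
    exact_mod_cast key
  exact_mod_cast hQ

theorem abs_card_Ioc_filter_intCast_mem_sub_le {M : ℕ} [NeZero M] {a b : ℤ} (hab : a ≤ b)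
    (S : Finset (ZMod M)) :
    |(#{n ∈ Ioc a b | ((n : ℤ) : ZMod M) ∈ S} : ℝ) - #S * (b - a) / M| ≤ #S := by
  have hfiber : (#{n ∈ Ioc a b | ((n : ℤ) : ZMod M) ∈ S} : ℝ)
      = ∑ x ∈ S, (#{n ∈ Ioc a b | ((n : ℤ) : ZMod M) = x} : ℝ) := by
    rw [card_eq_sum_card_fiberwise (s := {n ∈ Ioc a b | ((n : ℤ) : ZMod M) ∈ S}) (t := S)
      (f := fun n : ℤ => (n : ZMod M)) fun n hn => (mem_filter.mp hn).2]
    push_cast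
    refine sum_congr rfl fun x hx => ?_
    rw [filter_filter]
    congr 2
    exact filter_congr fun n _ => and_iff_right_of_imp fun h => h ▸ hx
  calc |(#{n ∈ Ioc a b | ((n : ℤ) : ZMod M) ∈ S} : ℝ) - #S * (b - a) / M|
      = |∑ x ∈ S, ((#{n ∈ Ioc a b | ((n : ℤ) : ZMod M) = x} : ℝ) - (b - a) / M)| := by
        rw [hfiber, sum_sub_distrib, sum_const, nsmul_eq_mul, mul_div_assoc]
    _ ≤ ∑ x ∈ S, |(#{n ∈ Ioc a b | ((n : ℤ) : ZMod M) = x} : ℝ) - (b - a) / M| :=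
        abs_sum_le_sum_abs _ _
    _ ≤ ∑ _x ∈ S, (1 : ℝ) := sum_le_sum fun x _ => (abs_card_Ioc_filter_intCast_eq_sub_lt hab x).le
    _ = #S := by simp

theorem card_filter_forall_cast_mem {ι : Type*} [Fintype ι] [DecidableEq ι] (m : ι → ℕ)
    (hm : Pairwise (Nat.Coprime on m)) [NeZero (∏ i, m i)] (T : ∀ i, Finset (ZMod (m i))) :
    #{x : ZMod (∏ i, m i) | ∀ i, (x.cast : ZMod (m i)) ∈ T i} = ∏ i, #(T i) := by
  have : ({x | ∀ i, (x.cast : ZMod (m i)) ∈ T i} : Finset (ZMod (∏ i, m i)))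
      = (Fintype.piFinset T).map (ZMod.prodEquivPi m hm).symm.toEquiv.toEmbedding := by
    ext x
    simp [mem_map_equiv]
  rw [this, card_map, Fintype.card_piFinset]

theorem card_filter_cast_mem_and_cast_mem {e D : ℕ} [NeZero (e * D)] (hed : e.Coprime D)
    (T : Finset (ZMod e)) (S : Finset (ZMod D)) :
    #{x : ZMod (e * D) | (x.cast : ZMod e) ∈ T ∧ (x.cast : ZMod D) ∈ S} = #T * #S := by
  let Φ := ZMod.chineseRemainder hed
  have hfst (x : ZMod (e * D)) : (Φ x).1 = x.cast := RingHom.congr_fun (RingHom.ext_zmod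
    ((RingHom.fst _ _).comp Φ.toRingHom) (ZMod.castHom (dvd_mul_right e D) _)) x
  have hsnd (x : ZMod (e * D)) : (Φ x).2 = x.cast := RingHom.congr_fun (RingHom.ext_zmod
    ((RingHom.snd _ _).comp Φ.toRingHom) (ZMod.castHom (dvd_mul_left D e) _)) x
  have : ({x | (x.cast : ZMod e) ∈ T ∧ (x.cast : ZMod D) ∈ S} : Finset (ZMod (e * D)))
      = (T ×ˢ S).map Φ.symm.toEquiv.toEmbedding := by
    ext x
    rw [mem_map_equiv]
    simp [← hfst, ← hsnd]
  rw [this, card_map, card_product]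

/-- The paper's `U_d = ∏_{p ∣ d} u_p(h)`. -/
def residueCount {ι : Type*} [Fintype ι] (k : ℕ) (h : ι → ℤ) (d : ℕ) : ℕ :=
  ∏ p ∈ d.primeFactors, #(univ.image fun i => (h i : ZMod (p ^ k)))

theorem card_image_intCast_neg_mul {ι : Type*} [Fintype ι] (h : ι → ℤ) {q m : ℕ}
    (hqm : q.Coprime m) :
    #(univ.image fun i => ((-(h i * q) : ℤ) : ZMod m)) = #(univ.image fun i => (h i : ZMod m)) := by
  have hu : IsUnit (-(q : ZMod m)) := ((ZMod.isUnit_iff_coprime q m).mpr hqm).neg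
  rw [← card_image_of_injective (univ.image fun i => (h i : ZMod m)) hu.mul_right_injective,
    image_image]
  congr 1
  refine image_congr fun i _ => ?_
  simp only [Function.comp_apply]
  push_cast
  ring

theorem pairwise_coprime_primeFactors_pow (d k : ℕ) :
    Pairwise (Nat.Coprime on fun p : d.primeFactors => (p : ℕ) ^ k) :=
  fun p r hpr => Nat.Coprime.pow k k <| (Nat.coprime_primes (Nat.prime_of_mem_primeFactors p.2)
    (Nat.prime_of_mem_primeFactors r.2)).mpr (Subtype.coe_injective.ne hpr)

theorem abs_card_filter_forall_and_dvd_sub_le {ι : Type*} [Fintype ι] (k : ℕ) (h : ι → ℤ)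
    {q d e : ℕ} (hd : Squarefree d) (hdq : d.Coprime q) (he : e ≠ 0) (hed : e.Coprime d)
    {a b : ℤ} (hab : a ≤ b) :
    |(#{n ∈ Ioc a b | (∀ p ∈ d.primeFactors, ∃ i, (p : ℤ) ^ k ∣ n + h i * q) ∧ (e : ℤ) ∣ n} : ℝ)
        - residueCount k h d * (b - a) / (e * d ^ k)| ≤ residueCount k h d := by
  have hD : ∏ p : d.primeFactors, (p : ℕ) ^ k = d ^ k := by
    rw [prod_coe_sort d.primeFactors (· ^ k), prod_pow, Nat.prod_primeFactors_of_squarefree hd]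
  set D := ∏ p : d.primeFactors, (p : ℕ) ^ k
  have : NeZero D := ⟨hD ▸ pow_ne_zero k hd.ne_zero⟩
  have : NeZero (e * D) := ⟨mul_ne_zero he (NeZero.ne D)⟩
  let T (p : d.primeFactors) : Finset (ZMod ((p : ℕ) ^ k)) :=
    univ.image fun i => ((-(h i * q) : ℤ) : ZMod _)
  let S : Finset (ZMod D) := {y | ∀ p, y.cast ∈ T p}
  have hS : #S = residueCount k h d := by
    rw [card_filter_forall_cast_mem _ (pairwise_coprime_primeFactors_pow d k), residueCount,
      ← prod_coe_sort d.primeFactors]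
    exact prod_congr rfl fun p _ => card_image_intCast_neg_mul h <|
      ((hdq.symm.coprime_dvd_right (Nat.dvd_of_mem_primeFactors p.2)).pow_right k)
  let P : Finset (ZMod (e * D)) :=
    {x | (x.cast : ZMod e) ∈ ({0} : Finset _) ∧ (x.cast : ZMod D) ∈ S}
  have hmem (n : ℤ) : ((∀ p ∈ d.primeFactors, ∃ i, (p : ℤ) ^ k ∣ n + h i * q) ∧ (e : ℤ) ∣ n) ↔
      (n : ZMod (e * D)) ∈ P := by
    have hpD (p : d.primeFactors) : (p : ℕ) ^ k ∣ D := dvd_prod_of_mem _ (mem_univ p)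
    simp only [ZMod.cast_intCast (dvd_mul_right e D), ZMod.cast_intCast (dvd_mul_left D e),
      mem_singleton, ZMod.intCast_zmod_eq_zero_iff_dvd, P, S, mem_filter, mem_univ, true_and]
    rw [and_comm]
    refine and_congr_right fun _ => ?_
    rw [Subtype.forall]
    refine forall₂_congr fun p hp => ?_
    simp only [ZMod.cast_intCast (hpD ⟨p, hp⟩), T, mem_image, mem_univ, true_and,
      ZMod.intCast_eq_intCast_iff_dvd_sub, sub_neg_eq_add, Nat.cast_pow]
  have key := abs_card_Ioc_filter_intCast_mem_sub_le hab P
  rw [card_filter_cast_mem_and_cast_mem (hD ▸ hed.pow_right k), card_singleton, one_mul, hS] at key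
  rw [filter_congr fun n _ => hmem n]
  convert key using 4
  push_cast [hD]
  rfl

theorem sum_moebius_filter_dvd_eq_ite {q : ℕ} (hq : q ≠ 0) (n : ℤ) :
    ∑ e ∈ q.divisors with ((e : ℕ) : ℤ) ∣ n, μ e = if Int.gcd n q = 1 then 1 else 0 := by
  have hset : ({e ∈ q.divisors | (e : ℤ) ∣ n} : Finset ℕ) = (Int.gcd n q).divisors := by
    ext e
    simp [Int.gcd, Nat.dvd_gcd_iff, Int.natCast_dvd, hq]
    tauto
  rw [hset, ← coe_mul_zeta_apply, moebius_mul_coe_zeta, one_apply]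

theorem card_filter_gcd_eq_one_eq_sum_moebius (s : Finset ℤ) {q : ℕ} (hq : q ≠ 0) :
    (#{n ∈ s | Int.gcd n q = 1} : ℤ) = ∑ e ∈ q.divisors, μ e * #{n ∈ s | (e : ℤ) ∣ n} := by
  calc (#{n ∈ s | Int.gcd n q = 1} : ℤ)
      = ∑ n ∈ s, ∑ e ∈ q.divisors, if (e : ℤ) ∣ n then μ e else 0 := by
        simp_rw [← sum_filter, sum_moebius_filter_dvd_eq_ite hq, sum_boole]
    _ = ∑ e ∈ q.divisors, μ e * #{n ∈ s | (e : ℤ) ∣ n} := by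
        rw [sum_comm]
        refine sum_congr rfl fun e _ => ?_
        rw [← sum_filter, sum_const, nsmul_eq_mul, mul_comm]

theorem sum_moebius_div_eq_totient_div {q : ℕ} (hq : q ≠ 0) :
    ∑ e ∈ q.divisors, (μ e : ℝ) / e = φ q / q := by
  have hinv := (sum_eq_iff_sum_mul_moebius_eq (f := fun n => (φ n : ℝ)) (g := fun n => (n : ℝ))).mp
    (fun n _ => by exact_mod_cast Nat.sum_totient n) q (Nat.pos_of_ne_zero hq)
  rw [Nat.sum_divisorsAntidiagonal (fun a b => (μ a : ℝ) * b)] at hinv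
  rw [← hinv, sum_div]
  refine sum_congr rfl fun e he => ?_
  have he0 : (e : ℝ) ≠ 0 := by exact_mod_cast (Nat.pos_of_mem_divisors he).ne'
  rw [Nat.cast_div (Nat.dvd_of_mem_divisors he) he0]
  field_simp

theorem abs_sum_moebius_mul_sub_totient_div_mul_le {q : ℕ} (hq : q ≠ 0) {A : ℕ → ℝ} {c E : ℝ}
    (hA : ∀ e ∈ q.divisors, |A e - c / e| ≤ E) :
    |∑ e ∈ q.divisors, μ e * A e - φ q / q * c| ≤ #q.divisors * E := by
  have hmain : (φ q / q : ℝ) * c = ∑ e ∈ q.divisors, μ e * (c / e) := by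
    rw [← sum_moebius_div_eq_totient_div hq, sum_mul]
    exact sum_congr rfl fun e _ => by ring
  calc |∑ e ∈ q.divisors, μ e * A e - φ q / q * c|
      = |∑ e ∈ q.divisors, (μ e : ℝ) * (A e - c / e)| := by
        rw [hmain, ← sum_sub_distrib]
        simp_rw [mul_sub]
    _ ≤ ∑ e ∈ q.divisors, |(μ e : ℝ) * (A e - c / e)| := abs_sum_le_sum_abs _ _
    _ ≤ ∑ _e ∈ q.divisors, E := sum_le_sum fun e he => by
        have hμ : |(μ e : ℝ)| ≤ 1 := by exact_mod_cast abs_moebius_le_one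
        rw [abs_mul]
        exact (mul_le_mul hμ (hA e he) (abs_nonneg _) zero_le_one).trans_eq (one_mul E)
    _ = #q.divisors * E := by rw [sum_const, nsmul_eq_mul]

theorem abs_card_filter_coprime_dvd_prod_sig_sub_le {ι : Type*} [Fintype ι] {k : ℕ} (hk : k ≠ 0)
    (h : ι → ℤ) {q d : ℕ} (hq : q ≠ 0) (hd : Squarefree d) (hdq : d.Coprime q) {a b : ℤ}
    (hab : a ≤ b) :
    |(#{n ∈ Ioc a b | Int.gcd n q = 1 ∧ (d : ℤ) ∣ ∏ i, sig k (n + h i * q)} : ℝ)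
        - φ q / q * (residueCount k h d / d ^ k) * (b - a)| ≤ #q.divisors * residueCount k h d := by
  have hmoebius : (#{n ∈ Ioc a b | (∀ p ∈ d.primeFactors, ∃ i, (p : ℤ) ^ k ∣ n + h i * q) ∧
        Int.gcd n q = 1} : ℝ) = ∑ e ∈ q.divisors, (μ e : ℝ) * #{n ∈ Ioc a b |
          (∀ p ∈ d.primeFactors, ∃ i, (p : ℤ) ^ k ∣ n + h i * q) ∧ (e : ℤ) ∣ n} := by
    have := card_filter_gcd_eq_one_eq_sum_moebius
      {n ∈ Ioc a b | ∀ p ∈ d.primeFactors, ∃ i, (p : ℤ) ^ k ∣ n + h i * q} hq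
    simp only [filter_filter] at this
    exact_mod_cast this
  rw [filter_congr fun n _ => by rw [natCast_dvd_prod_sig_iff hk hd, and_comm], hmoebius,
    show (φ q / q : ℝ) * (residueCount k h d / d ^ k) * (b - a)
      = φ q / q * (residueCount k h d * (b - a) / d ^ k) by ring]
  refine abs_sum_moebius_mul_sub_totient_div_mul_le hq fun e he => ?_
  rw [div_div, mul_comm _ (e : ℝ)]
  exact abs_card_filter_forall_and_dvd_sub_le k h hd hdq (Nat.pos_of_mem_divisors he).ne'
    (Nat.Coprime.coprime_dvd_left (Nat.dvd_of_mem_divisors he) hdq.symm) hab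

theorem totient_div_mul_div_pow_le (q : ℕ) {d : ℕ} (hd : d ≠ 0) (k : ℕ) {x : ℝ} (hx : 0 ≤ x) :
    φ q / q * (x / d ^ k) ≤ x := by
  have hφ : (φ q / q : ℝ) ≤ 1 :=
    div_le_one_of_le₀ (by exact_mod_cast Nat.totient_le q) (Nat.cast_nonneg q)
  have hdk : x / d ^ k ≤ x := div_le_self hx (one_le_pow₀ (by exact_mod_cast hd.bot_lt))
  exact (mul_le_mul hφ hdk (by positivity) zero_le_one).trans_eq (one_mul x)

theorem stmt_15_general (k j : ℕ) (hk : 2 ≤ k) :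
    ∃ C : ℝ, 0 < C ∧ ∀ (q d : ℕ) (h : Fin j → ℤ) (X₁ X₂ : ℝ),
      0 < q → Squarefree d → Nat.Coprime d q → 0 ≤ X₁ → X₁ < X₂ →
      |(((Finset.Ioc ⌊X₁⌋ ⌊X₂⌋).filter fun n =>
            Int.gcd n q = 1 ∧ (d : ℤ) ∣ ∏ i, sig k (n + h i * q)).card : ℝ)
          - (q.totient : ℝ) / q * ((∏ p ∈ d.primeFactors,
              ((Finset.univ.image fun i => ((h i : ZMod (p ^ k)))).card : ℝ)) / (d : ℝ) ^ k)
            * (X₂ - X₁)|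
        ≤ C * (q.divisors.card : ℝ) * ∏ p ∈ d.primeFactors,
            ((Finset.univ.image fun i => ((h i : ZMod (p ^ k)))).card : ℝ) := by
  refine ⟨2, two_pos, fun q d h X₁ X₂ hq hd hdq _ hX => ?_⟩
  have hU : (residueCount k h d : ℝ)
      = ∏ p ∈ d.primeFactors, (#(univ.image fun i => (h i : ZMod (p ^ k))) : ℝ) := by
    simp [residueCount]
  rw [← hU]
  set U := (residueCount k h d : ℝ)
  set c := (φ q / q : ℝ) * (U / d ^ k)
  have hinteger : |_ - c * (⌊X₂⌋ - ⌊X₁⌋)| ≤ #q.divisors * U :=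
    abs_card_filter_coprime_dvd_prod_sig_sub_le (by omega) h hq.ne' hd hdq
      (Int.floor_le_floor hX.le)
  have hround : |c * ((⌊X₂⌋ - ⌊X₁⌋) - (X₂ - X₁))| ≤ U := by
    have hfloor := abs_intCast_floor_sub_floor_sub_lt_one X₁ X₂
    push_cast at hfloor
    rw [abs_mul, abs_of_nonneg (by positivity)]
    exact (mul_le_of_le_one_right (by positivity) hfloor.le).trans
      (totient_div_mul_div_pow_le q hd.ne_zero k (by positivity))
  have hτ : (1 : ℝ) ≤ #q.divisors := by
    exact_mod_cast card_pos.mpr ⟨1, Nat.one_mem_divisors.mpr hq.ne'⟩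
  calc _ = |(_ - c * (⌊X₂⌋ - ⌊X₁⌋)) + c * ((⌊X₂⌋ - ⌊X₁⌋) - (X₂ - X₁))| := by
        congr 1; ring
    _ ≤ #q.divisors * U + U := (abs_add_le _ _).trans (add_le_add hinteger hround)
    _ ≤ 2 * #q.divisors * U := by nlinarith [hround.trans' (abs_nonneg _)]

/-- For squarefree d coprime to q,
N_d(X₁,X₂,q;h) = (φ(q)/q)(U_d/d^k)(X₂-X₁) + O_{j,k}(τ(q) U_d). -/
theorem stmt_15 (k j : ℕ) (hk : 2 ≤ k) (hj : 1 ≤ j) :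
    ∃ C : ℝ, 0 < C ∧ ∀ (q d : ℕ) (h : Fin j → ℤ) (X₁ X₂ : ℝ),
      0 < q → Squarefree d → Nat.Coprime d q → 0 ≤ X₁ → X₁ < X₂ →
      |(((Finset.Ioc ⌊X₁⌋ ⌊X₂⌋).filter fun n =>
            Int.gcd n q = 1 ∧ (d : ℤ) ∣ ∏ i, sig k (n + h i * q)).card : ℝ)
          - (q.totient : ℝ) / q * ((∏ p ∈ d.primeFactors,
              ((Finset.univ.image fun i => ((h i : ZMod (p ^ k)))).card : ℝ)) / (d : ℝ) ^ k)
            * (X₂ - X₁)|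
        ≤ C * (q.divisors.card : ℝ) * ∏ p ∈ d.primeFactors,
            ((Finset.univ.image fun i => ((h i : ZMod (p ^ k)))).card : ℝ) :=
  stmt_15_general k j hk
end
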